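/- arXiv:1808.05791 — 3 statements merged into one kernel-verified Lean document; each statement's English description precedes it below -/
import Mathlib

section
/- Let the C-colored arena O' be obtained from a C-colored arena O by finitely many operations, each being either a restriction to a subset satisfying the restriction condition or a product with a DFA over C. Then there exist a DFA 𝒜 over C with state set Q and a set S ⊆ V × Q satisfying the restriction condition in O × 𝒜 such that O' is isomorphic as an arena (a bijection preserving ownership by each player, colors, and the edge relation in both directions) to (O × 𝒜)|_S. -/
/-! Common framework: arenas, strategies, plays, winning, finite memory, (h)SPE. -/

structure Arena (V C : Type) where
  V1 : Set V
  V2 : Set V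
  E : Set (V × V)
  Γ : V → C

namespace Arena

variable {V C : Type}

/-- The vertex set of an arena. -/
def vertices (O : Arena V C) : Set V := O.V1 ∪ O.V2

/-- Well-formedness of an arena: the two players' vertex sets are disjoint, edges stay
within the vertex set, and every vertex has at least one outgoing edge. -/
def WF (O : Arena V C) : Prop :=
  Disjoint O.V1 O.V2 ∧ (∀ e ∈ O.E, e.1 ∈ O.vertices ∧ e.2 ∈ O.vertices) ∧
    ∀ v ∈ O.vertices, ∃ u, (v, u) ∈ O.E

/-- Restriction of an arena to a subset `S` of the vertices. -/
def restrict (O : Arena V C) (S : Set V) : Arena V C :=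
  ⟨O.V1 ∩ S, O.V2 ∩ S, O.E ∩ S ×ˢ S, O.Γ⟩

/-- Product of an arena with a DFA over the colors. -/
def prodDFA {Q : Type} (O : Arena V C) (A : DFA C Q) : Arena (V × Q) C :=
  ⟨O.V1 ×ˢ (Set.univ : Set Q), O.V2 ×ˢ (Set.univ : Set Q),
    {p : (V × Q) × V × Q | (p.1.1, p.2.1) ∈ O.E ∧ p.2.2 = A.step p.1.2 (O.Γ p.1.1)},
    fun vq => O.Γ vq.1⟩

/-- A strategy (for Player 1) is valid if it follows edges on Player 1's vertices. -/
def Valid1 (O : Arena V C) (σ : List C → V → V) : Prop :=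
  ∀ (w : List C), ∀ v ∈ O.V1, (v, σ w v) ∈ O.E

/-- A strategy (for Player 2) is valid if it follows edges on Player 2's vertices. -/
def Valid2 (O : Arena V C) (σ : List C → V → V) : Prop :=
  ∀ (w : List C), ∀ v ∈ O.V2, (v, σ w v) ∈ O.E

open Classical in
/-- The combination σ₁ ∪ σ₂ of a strategy profile into one function. -/
noncomputable def combine (O : Arena V C) (σ1 σ2 : List C → V → V) : List C → V → V :=
  fun w v => if v ∈ O.V1 then σ1 w v else σ2 w v

/-- The sequence of (history, current vertex) pairs generated by a profile from `(w, v)`. -/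
def stepSeq (O : Arena V C) (σ : List C → V → V) (w : List C) (v : V) : ℕ → List C × V
  | 0 => (w, v)
  | k + 1 =>
    let p := stepSeq O σ w v k
    (p.1 ++ [O.Γ p.2], σ p.1 p.2)

/-- The play `Σ_σ(w, v)` induced by a (combined) strategy profile `σ` from `(w, v)`:
its first `|w|` letters are `w`, then it continues with the colors of the visited vertices. -/
def play (O : Arena V C) (σ : List C → V → V) (w : List C) (v : V) : ℕ → C :=
  fun i => if h : i < w.length then w.get ⟨i, h⟩
    else O.Γ (stepSeq O σ w v (i - w.length)).2

/-- `σ1` is a winning strategy of Player 1 from `(w, v)` for winning condition `W`. -/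
def Winning1 (O : Arena V C) (W : Set (ℕ → C)) (σ1 : List C → V → V)
    (w : List C) (v : V) : Prop :=
  ∀ σ2, O.Valid2 σ2 → O.play (O.combine σ1 σ2) w v ∈ W

/-- `σ2` is a winning strategy of Player 2 from `(w, v)` for winning condition `W`. -/
def Winning2 (O : Arena V C) (W : Set (ℕ → C)) (σ2 : List C → V → V)
    (w : List C) (v : V) : Prop :=
  ∀ σ1, O.Valid1 σ1 → O.play (O.combine σ1 σ2) w v ∉ W

/-- Player 1 has a winning strategy from `(w, v)`. -/
def Wins1From (O : Arena V C) (W : Set (ℕ → C)) (w : List C) (v : V) : Prop :=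
  ∃ σ1, O.Valid1 σ1 ∧ O.Winning1 W σ1 w v

/-- Player 2 has a winning strategy from `(w, v)`. -/
def Wins2From (O : Arena V C) (W : Set (ℕ → C)) (w : List C) (v : V) : Prop :=
  ∃ σ2, O.Valid2 σ2 ∧ O.Winning2 W σ2 w v

/-- A strategy (of the player owning the vertices `Vi`) is finite-memory:
it is computed by a Moore machine with finitely many states. -/
def IsFM (Vi : Set V) (σ : List C → V → V) : Prop :=
  ∃ (M : Type) (_ : Fintype M) (m0 : M) (αu : M → C → M) (αn : M → V → V),
    ∀ (w : List C), ∀ v ∈ Vi, σ w v = αn (w.foldl αu m0) v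

/-- Finite-memory of size at most `k`. -/
def IsFMSize (Vi : Set V) (σ : List C → V → V) (k : ℕ) : Prop :=
  ∃ (M : Type) (inst : Fintype M), @Fintype.card M inst ≤ k ∧
    ∃ (m0 : M) (αu : M → C → M) (αn : M → V → V),
      ∀ (w : List C), ∀ v ∈ Vi, σ w v = αn (w.foldl αu m0) v

/-- The hSPE conditions for the profile `(σ1, σ2)` at `(w, v)`. -/
def hSPEAt (O : Arena V C) (W : Set (ℕ → C)) (σ1 σ2 : List C → V → V)
    (w : List C) (v : V) : Prop :=
  (O.play (O.combine σ1 σ2) w v ∈ W →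
    ∀ σ2', O.Valid2 σ2' → O.play (O.combine σ1 σ2') w v ∈ W) ∧
  (O.play (O.combine σ1 σ2) w v ∉ W →
    ∀ σ1', O.Valid1 σ1' → O.play (O.combine σ1' σ2) w v ∉ W)

/-- Hypothetical subgame-perfect equilibrium: hSPE conditions at every `(w, v) ∈ C^* × V`. -/
def IsHSPE (O : Arena V C) (W : Set (ℕ → C)) (σ1 σ2 : List C → V → V) : Prop :=
  O.Valid1 σ1 ∧ O.Valid2 σ2 ∧ ∀ (w : List C), ∀ v ∈ O.vertices, O.hSPEAt W σ1 σ2 w v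

/-- Histories realizable in the arena: `w` is the color sequence of a path ending at `v`. -/
inductive Hist (O : Arena V C) : List C → V → Prop
  | base (v : V) (hv : v ∈ O.vertices) : Hist O [] v
  | step {w : List C} {v : V} (h : Hist O w v) {v' : V} (he : (v, v') ∈ O.E) :
      Hist O (w ++ [O.Γ v]) v'

/-- Subgame-perfect equilibrium: hSPE conditions at every realizable `(w, v)`. -/
def IsSPE (O : Arena V C) (W : Set (ℕ → C)) (σ1 σ2 : List C → V → V) : Prop :=
  O.Valid1 σ1 ∧ O.Valid2 σ2 ∧ ∀ (w : List C) (v : V), O.Hist w v → O.hSPEAt W σ1 σ2 w v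

/-- A game is regularly-predictable if for each vertex `v` a finite automaton recognizes
the histories from which Player 1 has a winning strategy at `v`. -/
def RegularlyPredictable (O : Arena V C) (W : Set (ℕ → C)) : Prop :=
  ∀ v ∈ O.vertices, ∃ (Q : Type) (_ : Fintype Q) (A : DFA C Q),
    ∀ w : List C, w ∈ A.accepts ↔ O.Wins1From W w v

/-- The game has a finite-memory hSPE. -/
def HasFMhSPE (O : Arena V C) (W : Set (ℕ → C)) : Prop :=
  ∃ σ1 σ2, O.IsHSPE W σ1 σ2 ∧ IsFM O.V1 σ1 ∧ IsFM O.V2 σ2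

/-- The game has a finite-memory SPE. -/
def HasFMSPE (O : Arena V C) (W : Set (ℕ → C)) : Prop :=
  ∃ σ1 σ2, O.IsSPE W σ1 σ2 ∧ IsFM O.V1 σ1 ∧ IsFM O.V2 σ2

end Arena

/-- The prefix of length `n` of an infinite sequence of colors. -/
def seqPrefix {C : Type} (ρ : ℕ → C) (n : ℕ) : List C := (List.range n).map ρ

/-- A language is regular if it is accepted by a DFA with a finite state set. -/
def IsRegularLang {C : Type} (L : Set (List C)) : Prop :=
  ∃ (Q : Type) (_ : Fintype Q) (A : DFA C Q), ∀ w : List C, w ∈ A.accepts ↔ w ∈ L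

/-- `Rl 𝒲 l`: winning conditions obtained as a Boolean combination of members of `𝒲`
and of `l` conditions `Pref(ρ) ∩ Lⱼ = ∅` with the `Lⱼ` regular. -/
def Rl {C : Type} (𝒲 : Set (Set (ℕ → C))) (l : ℕ) : Set (Set (ℕ → C)) :=
  { W' | ∃ (k : ℕ) (φ : (Fin k → Prop) → (Fin l → Prop) → Prop)
      (Ws : Fin k → Set (ℕ → C)) (Ls : Fin l → Set (List C)),
      (∀ i, Ws i ∈ 𝒲) ∧ (∀ j, IsRegularLang (Ls j)) ∧
      W' = {ρ | φ (fun i => ρ ∈ Ws i) (fun j => ∀ n : ℕ, seqPrefix ρ n ∉ Ls j)} }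

/-- Prepending a color to an infinite sequence. -/
def consSeq {C : Type} (c : C) (ρ : ℕ → C) : ℕ → C
  | 0 => c
  | n + 1 => ρ n

/-- The battery-like energy level sequence: `e 0 = 0`, `e (k+1) = min (e k + d k) b`. -/
def batteryLevel (d : ℕ → ℤ) (b : ℤ) : ℕ → ℤ
  | 0 => 0
  | k + 1 => min (batteryLevel d b k + d k) b

/-- Arenas with their vertex type packaged. -/
def PArena (C : Type) := Σ V : Type, Arena V C

/-- `Derives A B`: the arena `B` is obtained from `A` by finitely many operations, each
being either a restriction (to a subset satisfying the restriction condition) or a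
product with a DFA with finitely many states. -/
inductive Derives {C : Type} (A : PArena C) : PArena C → Prop
  | refl : Derives A A
  | restrict {B : PArena C} (h : Derives A B) (S : Set B.1) (hS : S ⊆ B.2.vertices)
      (hsucc : ∀ v ∈ S, ∃ u ∈ S, (v, u) ∈ B.2.E) :
      Derives A ⟨B.1, B.2.restrict S⟩
  | prod {B : PArena C} (h : Derives A B) (Q : Type) (inst : Fintype Q) (D : DFA C Q) :
      Derives A ⟨B.1 × Q, B.2.prodDFA D⟩

/-- Isomorphism of arenas: a bijection between the vertex sets preserving ownership by
each player, colors, and the edge relation in both directions. -/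
def ArenaIso {V V' C : Type} (O : Arena V C) (O' : Arena V' C) : Prop :=
  ∃ e : V → V',
    Set.BijOn e O.vertices O'.vertices ∧
    (∀ v ∈ O.vertices, (v ∈ O.V1 ↔ e v ∈ O'.V1)) ∧
    (∀ v ∈ O.vertices, (v ∈ O.V2 ↔ e v ∈ O'.V2)) ∧
    (∀ v ∈ O.vertices, O'.Γ (e v) = O.Γ v) ∧
    (∀ v ∈ O.vertices, ∀ u ∈ O.vertices, ((v, u) ∈ O.E ↔ (e v, e u) ∈ O'.E))

lemma Arena.vertices_restrict {V C : Type} (O : Arena V C) {S : Set V}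
    (h : S ⊆ O.vertices) : (O.restrict S).vertices = S := by
  ext v
  simp only [Arena.restrict, Arena.vertices, Set.mem_union, Set.mem_inter_iff]
  constructor
  · rintro (⟨_, hv⟩ | ⟨_, hv⟩) <;> exact hv
  · intro hv
    rcases h hv with h1 | h1
    · exact Or.inl ⟨h1, hv⟩
    · exact Or.inr ⟨h1, hv⟩

lemma Arena.vertices_prod {V C Q : Type} (O : Arena V C) (A : DFA C Q) :
    (O.prodDFA A).vertices = O.vertices ×ˢ (Set.univ : Set Q) := by
  simp [Arena.prodDFA, Arena.vertices, Set.union_prod]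

/-- any arena derived by finitely many restrictions and products is
isomorphic to a single restriction of a single product. -/
theorem stmt3 {C V : Type} (O : Arena V C) (hwf : O.WF) (O' : PArena C)
    (h : Derives (⟨V, O⟩ : PArena C) O') :
    ∃ (Q : Type) (_ : Fintype Q) (A : DFA C Q) (S : Set (V × Q)),
      S ⊆ (O.prodDFA A).vertices ∧
      (∀ p ∈ S, ∃ p' ∈ S, (p, p') ∈ (O.prodDFA A).E) ∧
      ArenaIso O'.2 ((O.prodDFA A).restrict S) := by
  induction h with
  | refl =>
    refine ⟨Unit, inferInstance, ⟨fun _ _ => (), (), ∅⟩, O.vertices ×ˢ Set.univ,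
      ?_, ?_, ?_⟩
    · rw [Arena.vertices_prod]
    · rintro ⟨v, u⟩ hp
      have hv : v ∈ O.vertices := hp.1
      obtain ⟨w, hw⟩ := hwf.2.2 v hv
      exact ⟨(w, ()), ⟨(hwf.2.1 _ hw).2, trivial⟩, hw, rfl⟩
    · have hsub : O.vertices ×ˢ (Set.univ : Set Unit) ⊆
          (O.prodDFA ⟨fun _ _ => (), (), ∅⟩).vertices := by
        rw [Arena.vertices_prod]
      refine ⟨fun v => (v, ()), ?_, ?_, ?_, ?_, ?_⟩
      · rw [Arena.vertices_restrict _ hsub]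
        refine ⟨fun v hv => ⟨hv, trivial⟩, fun a _ b _ h => congrArg Prod.fst h, ?_⟩
        rintro ⟨v, u⟩ ⟨hv, -⟩
        exact ⟨v, hv, by cases u; rfl⟩
      · intro v hv
        simp only [Arena.restrict, Arena.prodDFA, Set.mem_inter_iff, Set.mem_prod,
          Set.mem_univ, and_true, Set.mem_setOf_eq]
        exact ⟨fun h => ⟨h, hv⟩, fun h => h.1⟩
      · intro v hv
        simp only [Arena.restrict, Arena.prodDFA, Set.mem_inter_iff, Set.mem_prod,
          Set.mem_univ, and_true, Set.mem_setOf_eq]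
        exact ⟨fun h => ⟨h, hv⟩, fun h => h.1⟩
      · intro v hv; rfl
      · intro v hv u hu
        simp only [Arena.restrict, Arena.prodDFA, Set.mem_inter_iff, Set.mem_prod,
          Set.mem_univ, and_true, Set.mem_setOf_eq]
        tauto
  | @restrict B hB S' hS' hsucc ih =>
    obtain ⟨Q, fQ, A, S, hSsub, hSsucc, e, hbij, h1, h2, hΓ, hE⟩ := ih
    have hRvert : ((O.prodDFA A).restrict S).vertices = S :=
      Arena.vertices_restrict _ hSsub
    rw [hRvert] at hbij
    have heS : ∀ v ∈ B.2.vertices, e v ∈ S := fun v hv => hbij.mapsTo hv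
    have hTsubS : e '' S' ⊆ S := by
      rintro - ⟨v, hv, rfl⟩; exact heS v (hS' hv)
    have hTsub : e '' S' ⊆ (O.prodDFA A).vertices := hTsubS.trans hSsub
    refine ⟨Q, fQ, A, e '' S', hTsub, ?_, ?_⟩
    · rintro - ⟨v, hv, rfl⟩
      obtain ⟨u, hu, hvu⟩ := hsucc v hv
      have := (hE v (hS' hv) u (hS' hu)).mp hvu
      exact ⟨e u, Set.mem_image_of_mem e hu, this.1⟩
    · refine ⟨e, ?_, ?_, ?_, ?_, ?_⟩
      · rw [Arena.vertices_restrict _ hS', Arena.vertices_restrict _ hTsub]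
        exact ⟨Set.mapsTo_image e S', (hbij.injOn.mono hS'), Set.surjOn_image e S'⟩
      · intro v hv
        rw [Arena.vertices_restrict _ hS'] at hv
        have := h1 v (hS' hv)
        simp only [Arena.restrict, Set.mem_inter_iff] at this ⊢
        exact ⟨fun h => ⟨(this.mp h.1).1, Set.mem_image_of_mem e hv⟩,
          fun h => ⟨this.mpr ⟨h.1, hTsubS h.2⟩, hv⟩⟩
      · intro v hv
        rw [Arena.vertices_restrict _ hS'] at hv
        have := h2 v (hS' hv)
        simp only [Arena.restrict, Set.mem_inter_iff] at this ⊢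
        exact ⟨fun h => ⟨(this.mp h.1).1, Set.mem_image_of_mem e hv⟩,
          fun h => ⟨this.mpr ⟨h.1, hTsubS h.2⟩, hv⟩⟩
      · intro v hv
        rw [Arena.vertices_restrict _ hS'] at hv
        exact hΓ v (hS' hv)
      · intro v hv u hu
        rw [Arena.vertices_restrict _ hS'] at hv hu
        have := hE v (hS' hv) u (hS' hu)
        simp only [Arena.restrict, Set.mem_inter_iff, Set.mem_prod] at this ⊢
        constructor
        · rintro ⟨hvu, -, -⟩
          exact ⟨(this.mp hvu).1,
            Set.mem_image_of_mem e hv, Set.mem_image_of_mem e hu⟩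
        · rintro ⟨hvu, -, -⟩
          exact ⟨this.mpr ⟨hvu, hTsubS (Set.mem_image_of_mem e hv),
            hTsubS (Set.mem_image_of_mem e hu)⟩, hv, hu⟩
  | @prod B hB Q' instQ' D ih =>
    obtain ⟨Q, fQ, A, S, hSsub, hSsucc, e, hbij, h1, h2, hΓ, hE⟩ := ih
    have hRvert : ((O.prodDFA A).restrict S).vertices = S :=
      Arena.vertices_restrict _ hSsub
    rw [hRvert] at hbij
    have heS : ∀ v ∈ B.2.vertices, e v ∈ S := fun v hv => hbij.mapsTo hv
    set A' : DFA C (Q × Q') :=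
      ⟨fun p c => (A.step p.1 c, D.step p.2 c), (A.start, D.start), ∅⟩ with hA'
    set S'' : Set (V × Q × Q') := {p | (p.1, p.2.1) ∈ S} with hS''
    have hS''sub : S'' ⊆ (O.prodDFA A').vertices := by
      rintro ⟨v, q, d⟩ hp
      have := hSsub hp
      rw [Arena.vertices_prod] at this ⊢
      exact ⟨this.1, trivial⟩
    refine ⟨Q × Q', inferInstance, A', S'', hS''sub, ?_, ?_⟩
    · rintro ⟨v, q, d⟩ hp
      obtain ⟨⟨v', q'⟩, hp', he'⟩ := hSsucc (v, q) hp
      simp only [Arena.prodDFA, Set.mem_setOf_eq] at he'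
      exact ⟨(v', q', D.step d (O.Γ v)), hp',
        he'.1, by simp [hA', he'.2]⟩
    · refine ⟨fun p => ((e p.1).1, (e p.1).2, p.2), ?_, ?_, ?_, ?_, ?_⟩
      · rw [Arena.vertices_restrict _ hS''sub, Arena.vertices_prod]
        constructor
        · rintro ⟨b, d⟩ ⟨hb, -⟩
          simp only [hS'', Set.mem_setOf_eq]
          have := heS b hb
          simpa using this
        constructor
        · rintro ⟨b, d⟩ ⟨hb, -⟩ ⟨b', d'⟩ ⟨hb', -⟩ hfeq
          simp only [Prod.mk.injEq] at hfeq
          have : e b = e b' := Prod.ext hfeq.1 hfeq.2.1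
          exact Prod.ext (hbij.injOn hb hb' this) hfeq.2.2
        · rintro ⟨v, q, d⟩ hp
          obtain ⟨b, hb, hbe⟩ := hbij.surjOn hp
          exact ⟨(b, d), ⟨hb, trivial⟩, by simp [hbe]⟩
      · rw [Arena.vertices_prod]
        rintro ⟨b, d⟩ ⟨hb, -⟩
        have := h1 b hb
        simp only [Arena.restrict, Arena.prodDFA, Set.mem_inter_iff, Set.mem_prod,
          Set.mem_univ, and_true, Set.mem_setOf_eq, hS''] at this ⊢
        have heSb := heS b hb
        exact ⟨fun h => ⟨(this.mp h).1, heSb⟩, fun h => this.mpr ⟨h.1, heSb⟩⟩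
      · rw [Arena.vertices_prod]
        rintro ⟨b, d⟩ ⟨hb, -⟩
        have := h2 b hb
        simp only [Arena.restrict, Arena.prodDFA, Set.mem_inter_iff, Set.mem_prod,
          Set.mem_univ, and_true, Set.mem_setOf_eq, hS''] at this ⊢
        have heSb := heS b hb
        exact ⟨fun h => ⟨(this.mp h).1, heSb⟩, fun h => this.mpr ⟨h.1, heSb⟩⟩
      · rw [Arena.vertices_prod]
        rintro ⟨b, d⟩ ⟨hb, -⟩
        exact hΓ b hb
      · rw [Arena.vertices_prod]
        rintro ⟨b, d⟩ ⟨hb, -⟩ ⟨b', d'⟩ ⟨hb', -⟩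
        have hΓb : O.Γ (e b).1 = B.2.Γ b := hΓ b hb
        have := hE b hb b' hb'
        simp only [Arena.restrict, Arena.prodDFA, Set.mem_inter_iff, Set.mem_prod,
          Set.mem_setOf_eq, hS'', hA'] at this ⊢
        constructor
        · rintro ⟨hbb', hd⟩
          obtain ⟨⟨hO, hq⟩, hs1, hs2⟩ := this.mp hbb'
          exact ⟨⟨hO, by simp [hq, hd, hΓb]⟩, hs1, hs2⟩
        · rintro ⟨⟨hO, hqd⟩, hs1, hs2⟩
          rw [Prod.ext_iff] at hqd
          exact ⟨this.mpr ⟨⟨hO, hqd.1⟩, hs1, hs2⟩, by rw [← hΓb]; exact hqd.2⟩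
end

section
/- Consider the C-colored arena with C = {−1, 1} ⊆ ℤ, V₁ = {a, b}, V₂ = ∅, Γ(a) = 1, Γ(b) = −1 and edge relation E = V × V, together with the winning condition W = {ρ ∈ C^ω : for all n, Σ_{i<n} ρ(i) ≥ 0} (the energy condition with lower bound 0 and no upper bound). Then no DFA over C with a finite state set accepts exactly the language {w ∈ C^* : Player 1 has a winning strategy from (w, a)}; in particular this game is not regularly-predictable, and hence the lower-bounded energy winning condition is not regularly-predictable. -/
/-- The two colors `-1` and `1`. -/
abbrev Col4 : Type := {z : ℤ // z = -1 ∨ z = 1}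

/-- The two vertices of the one-player arena. -/
inductive V4 : Type | a | b

/-- The one-player arena on the two-clique with self-loops, one vertex giving `+1`
energy and the other `-1`. -/
def O4 : Arena V4 Col4 :=
  ⟨Set.univ, ∅, Set.univ,
    fun v => match v with
      | V4.a => ⟨1, Or.inr rfl⟩
      | V4.b => ⟨-1, Or.inl rfl⟩⟩

/-- The energy condition with lower bound 0 and no upper bound. -/
def W4 : Set (ℕ → Col4) := {ρ | ∀ n : ℕ, 0 ≤ ∑ i ∈ Finset.range n, (ρ i).val}

/-! ### Auxiliary material for the proof -/

instance : Finite V4 :=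
  Finite.of_surjective (fun b : Bool => if b then V4.a else V4.b)
    (by rintro (_ | _); exacts [⟨true, rfl⟩, ⟨false, rfl⟩])

/-- The color `1`. -/
def c1 : Col4 := ⟨1, Or.inr rfl⟩
/-- The color `-1`. -/
def cm : Col4 := ⟨-1, Or.inl rfl⟩

/-- Values of `w` extended with `1`s. -/
noncomputable def wv (w : List Col4) (i : ℕ) : ℤ :=
  if h : i < w.length then (w.get ⟨i, h⟩).val else 1

/-- The strategy of always going to `a`. -/
def σA : List Col4 → V4 → V4 := fun _ _ => V4.a

lemma stepA (σ2 : List Col4 → V4 → V4) (w : List Col4) :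
    ∀ k, (O4.stepSeq (O4.combine σA σ2) w V4.a k).2 = V4.a := by
  intro k
  induction k with
  | zero => rfl
  | succ k ih =>
    show (O4.combine σA σ2) _ _ = V4.a
    rw [show (O4.stepSeq (O4.combine σA σ2) w V4.a k).2 = V4.a from ih]
    simp [Arena.combine, O4, σA]

lemma playA (σ2 : List Col4 → V4 → V4) (w : List Col4) (i : ℕ) :
    ((O4.play (O4.combine σA σ2) w V4.a) i).val = wv w i := by
  unfold Arena.play wv
  by_cases h : i < w.length
  · simp [h]
  · simp only [h, dif_neg, not_false_iff]
    rw [stepA]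
    rfl

lemma play_prefix (σ : List Col4 → V4 → V4) (w : List Col4) (v : V4) (i : ℕ)
    (h : i < w.length) : (O4.play σ w v) i = w.get ⟨i, h⟩ := by
  unfold Arena.play
  simp [h]

lemma sum_wv_ext (w : List Col4) (h : ∀ n ≤ w.length, 0 ≤ ∑ i ∈ Finset.range n, wv w i) :
    ∀ n, 0 ≤ ∑ i ∈ Finset.range n, wv w i := by
  intro n
  induction n with
  | zero => simp
  | succ n ih =>
    by_cases hn : n + 1 ≤ w.length
    · exact h _ hn
    · rw [Finset.sum_range_succ]
      have hwv : wv w n = 1 := by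
        unfold wv
        rw [dif_neg]; omega
      rw [hwv]
      linarith

/-- Characterization of winning from `(w, a)`. -/
lemma wins_iff (w : List Col4) :
    O4.Wins1From W4 w V4.a ↔ ∀ n ≤ w.length, 0 ≤ ∑ i ∈ Finset.range n, wv w i := by
  constructor
  · rintro ⟨σ1, _, hwin⟩ n hn
    have hv2 : O4.Valid2 (fun _ v => v) := by
      intro w' v hv
      simp [O4] at hv
    have hmem := hwin _ hv2
    have := hmem n
    calc (0 : ℤ) ≤ ∑ i ∈ Finset.range n,
        ((O4.play (O4.combine σ1 fun _ v => v) w V4.a) i).val := this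
      _ = ∑ i ∈ Finset.range n, wv w i := by
          apply Finset.sum_congr rfl
          intro i hi
          have hi' : i < w.length := lt_of_lt_of_le (Finset.mem_range.mp hi) hn
          rw [play_prefix _ _ _ _ hi']
          unfold wv
          rw [dif_pos hi']
  · intro h
    refine ⟨σA, ?_, ?_⟩
    · intro w' v _; simp [O4]
    · intro σ2 _
      intro n
      have : ∑ i ∈ Finset.range n, ((O4.play (O4.combine σA σ2) w V4.a) i).val
          = ∑ i ∈ Finset.range n, wv w i :=
        Finset.sum_congr rfl fun i _ => playA σ2 w i
      rw [this]
      exact sum_wv_ext w h n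

lemma sum_wv_take (w : List Col4) (k : ℕ) (hk : k ≤ w.length) :
    ∑ i ∈ Finset.range k, wv w i = ((w.take k).map Subtype.val).sum := by
  induction k with
  | zero => simp
  | succ k ih =>
    have hk' : k ≤ w.length := Nat.le_of_succ_le hk
    have hlt : k < w.length := hk
    rw [Finset.sum_range_succ, ih hk']
    rw [List.take_succ]
    simp [List.getElem?_eq_getElem hlt, wv, hlt]

lemma map_val_replicate (n : ℕ) (c : Col4) :
    ((List.replicate n c).map Subtype.val) = List.replicate n c.val := by
  simp

/-- The up-down word. -/
def ud (n m : ℕ) : List Col4 := List.replicate n c1 ++ List.replicate m cm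

lemma ud_length (n m : ℕ) : (ud n m).length = n + m := by simp [ud]

lemma sum_ud (n m k : ℕ) (hk : k ≤ n + m) :
    ∑ i ∈ Finset.range k, wv (ud n m) i
      = if k ≤ n then (k : ℤ) else (2 * n : ℤ) - k := by
  rw [sum_wv_take _ _ (by rw [ud_length]; exact hk)]
  by_cases h : k ≤ n
  · rw [if_pos h]
    unfold ud
    rw [List.take_append_of_le_length (by simpa using h), List.take_replicate]
    simp [min_eq_left h, c1]
  · rw [if_neg h]
    unfold ud
    have hk2 : k = n + (k - n) := by omega
    rw [hk2, show n + (k - n) = (List.replicate n c1).length + (k - n) by simp,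
      List.take_length_add_append, List.take_replicate]
    have hmin : (k - n) ⊓ m = k - n := by omega
    rw [hmin]
    simp only [List.map_append, List.sum_append, map_val_replicate, List.sum_replicate,
      List.length_replicate, c1, cm, smul_eq_mul, nsmul_eq_mul]
    push_cast
    omega

lemma wins_ud_eq (m : ℕ) : O4.Wins1From W4 (ud m m) V4.a := by
  rw [wins_iff]
  intro k hk
  rw [ud_length] at hk
  rw [sum_ud m m k hk]
  split <;> omega

lemma not_wins_ud (n m : ℕ) (h : n < m) : ¬ O4.Wins1From W4 (ud n m) V4.a := by
  rw [wins_iff]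
  intro hcon
  have := hcon (n + m) (by rw [ud_length])
  rw [sum_ud n m (n + m) le_rfl] at this
  by_cases hc : n + m ≤ n
  · omega
  · rw [if_neg hc] at this; push_cast at this; omega

/-- energy games with only a lower bound are not regularly-predictable. -/
theorem stmt4 :
    (¬ ∃ (Q : Type) (_ : Fintype Q) (A : DFA Col4 Q),
      ∀ w : List Col4, w ∈ A.accepts ↔ O4.Wins1From W4 w V4.a) ∧
    (¬ O4.RegularlyPredictable W4) ∧
    (¬ ∀ (V : Type) (O : Arena V Col4), O.WF → O.vertices.Finite →
        O.RegularlyPredictable W4) := by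
  have main : ¬ ∃ (Q : Type) (_ : Fintype Q) (A : DFA Col4 Q),
      ∀ w : List Col4, w ∈ A.accepts ↔ O4.Wins1From W4 w V4.a := by
    rintro ⟨Q, hQ, A, hA⟩
    obtain ⟨n, m, hnm, heq⟩ :=
      Finite.exists_ne_map_eq_of_infinite (fun n : ℕ => A.eval (List.replicate n c1))
    wlog hlt : n < m generalizing n m
    · exact this m n hnm.symm heq.symm (by omega)
    have key : ∀ j, A.eval (ud n j) = A.eval (ud m j) := by
      intro j
      unfold ud
      rw [DFA.eval, DFA.evalFrom_of_append, DFA.evalFrom_of_append]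
      show A.evalFrom (A.eval _) _ = A.evalFrom (A.eval _) _
      rw [heq]
    have h1 : ud m m ∈ A.accepts := (hA _).mpr (wins_ud_eq m)
    have h2 : ud n m ∉ A.accepts := fun hc => not_wins_ud n m hlt ((hA _).mp hc)
    rw [DFA.mem_accepts] at h1 h2
    rw [key m] at h2
    exact h2 h1
  have hrp : ¬ O4.RegularlyPredictable W4 := by
    intro hrp
    exact main (hrp V4.a (Or.inl (Set.mem_univ _)))
  refine ⟨main, hrp, ?_⟩
  intro hall
  refine hrp (hall V4 O4 ?_ ?_)
  · refine ⟨?_, ?_, ?_⟩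
    · simp [O4, Set.disjoint_iff]
    · intro e _
      constructor <;> exact Or.inl (Set.mem_univ _)
    · intro v _; exact ⟨v, Set.mem_univ _⟩
  · exact Set.toFinite _
end

section
/- Let C be a set of colors. Let 𝒪 be a class of C-colored arenas such that for every O ∈ 𝒪: (i) for every DFA 𝒜 over C, the product O × 𝒜 is in 𝒪, and (ii) for every subset S of the vertices of O satisfying the restriction condition, O|_S ∈ 𝒪. Let 𝒲 be a class of winning conditions over C closed under complement and binary union. Assume that every game (O, W) with O ∈ 𝒪 and W ∈ 𝒲 is regularly-predictable and has a finite-memory hSPE. Then for every l ∈ ℕ, every game (O, W') with O ∈ 𝒪 and W' ∈ R_l(𝒲) is regularly-predictable and has a finite-memory hSPE. -/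
/-! ### Part 1: basic lemmas on plays and step sequences -/

open Arena

namespace Aux

attribute [local instance] Classical.propDecidable

variable {V C : Type}

lemma stepSeq_succ (O : Arena V C) (σ : List C → V → V) (w : List C) (v : V) (k : ℕ) :
    O.stepSeq σ w v (k+1) =
      ((O.stepSeq σ w v k).1 ++ [O.Γ (O.stepSeq σ w v k).2],
        σ (O.stepSeq σ w v k).1 (O.stepSeq σ w v k).2) := rfl

lemma stepSeq_shift (O : Arena V C) (σ : List C → V → V) (w : List C) (v : V) (k : ℕ) :
    O.stepSeq σ (w ++ [O.Γ v]) (σ w v) k = O.stepSeq σ w v (k+1) := by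
  induction k with
  | zero => rfl
  | succ k ih => rw [stepSeq_succ, ih]; exact (stepSeq_succ ..).symm

lemma play_step (O : Arena V C) (σ : List C → V → V) (w : List C) (v : V) :
    O.play σ w v = O.play σ (w ++ [O.Γ v]) (σ w v) := by
  funext i
  unfold Arena.play
  by_cases h : i < w.length
  · have h2 : i < (w ++ [O.Γ v]).length := by simp; omega
    rw [dif_pos h, dif_pos h2]
    simp only [List.get_eq_getElem]
    rw [List.getElem_append_left h]
  · by_cases h3 : i < (w ++ [O.Γ v]).length
    · have hi : i = w.length := by simp at h3; omega
      subst hi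
      rw [dif_neg h, dif_pos h3]
      simp [Arena.stepSeq]
    · rw [dif_neg h, dif_neg h3]
      have h4 : i - w.length = (i - (w ++ [O.Γ v]).length) + 1 := by
        simp only [List.length_append, List.length_singleton] at h3 ⊢; omega
      rw [h4, ← stepSeq_shift]

lemma play_through (O : Arena V C) (σ : List C → V → V) (w : List C) (v : V) (k : ℕ) :
    O.play σ w v = O.play σ (O.stepSeq σ w v k).1 (O.stepSeq σ w v k).2 := by
  induction k with
  | zero => rfl
  | succ k ih => rw [ih, stepSeq_succ]; exact play_step ..

lemma stepSeq_fst_prefix (O : Arena V C) (σ : List C → V → V) (w : List C) (v : V) (k : ℕ) :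
    w <+: (O.stepSeq σ w v k).1 := by
  induction k with
  | zero => exact List.prefix_rfl
  | succ k ih => rw [stepSeq_succ]; exact ih.trans (List.prefix_append _ _)

lemma stepSeq_congr (O : Arena V C) {σ σ' : List C → V → V} {w : List C} {v : V}
    (h : ∀ w' v', w <+: w' → σ w' v' = σ' w' v') (k : ℕ) :
    O.stepSeq σ w v k = O.stepSeq σ' w v k := by
  induction k with
  | zero => rfl
  | succ k ih =>
      rw [stepSeq_succ, stepSeq_succ, ih,
        h _ _ (by rw [← ih]; exact stepSeq_fst_prefix ..)]

lemma play_congr (O : Arena V C) {σ σ' : List C → V → V} {w : List C} {v : V}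
    (h : ∀ w' v', w <+: w' → σ w' v' = σ' w' v') :
    O.play σ w v = O.play σ' w v := by
  funext i
  unfold Arena.play
  by_cases hi : i < w.length
  · rw [dif_pos hi, dif_pos hi]
  · rw [dif_neg hi, dif_neg hi, stepSeq_congr O h]

/-- The `(|w|+k)`-prefix of a play from `(w,v)` is the history after `k` steps. -/
lemma seqPrefix_play (O : Arena V C) (σ : List C → V → V) (w : List C) (v : V) (k : ℕ) :
    seqPrefix (O.play σ w v) (w.length + k) = (O.stepSeq σ w v k).1 := by
  induction k with
  | zero =>
      apply List.ext_getElem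
      · simp [seqPrefix, Arena.stepSeq]
      · intro i h1 h2
        simp only [seqPrefix, List.getElem_map, List.getElem_range]
        have hiw : i < w.length := by simpa [seqPrefix] using h1
        unfold Arena.play
        rw [dif_pos hiw]
        rfl
  | succ k ih =>
      have : w.length + (k+1) = (w.length + k) + 1 := rfl
      rw [this]
      have hsp : seqPrefix (O.play σ w v) ((w.length + k) + 1)
          = seqPrefix (O.play σ w v) (w.length + k) ++ [O.play σ w v (w.length + k)] := by
        simp [seqPrefix, List.range_succ]
      rw [hsp, ih, stepSeq_succ]
      have hpl : O.play σ w v (w.length + k) = O.Γ (O.stepSeq σ w v k).2 := by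
        unfold Arena.play
        rw [dif_neg (by omega)]
        have h5 : w.length + k - w.length = k := by omega
        rw [h5]
      rw [hpl]

lemma seqPrefix_take (ρ : ℕ → C) {n m : ℕ} (h : n ≤ m) :
    (seqPrefix ρ m).take n = seqPrefix ρ n := by
  simp [seqPrefix, ← List.map_take, List.take_range, Nat.min_eq_left h]

lemma seqPrefix_le (ρ : ℕ → C) {n m : ℕ} (h : n ≤ m) :
    seqPrefix ρ n <+: seqPrefix ρ m :=
  seqPrefix_take ρ h ▸ List.take_prefix _ _

lemma prefix_seqPrefix (ρ : ℕ → C) {u : List C} {m : ℕ} (h : u <+: seqPrefix ρ m) :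
    u = seqPrefix ρ u.length := by
  have hlen : u.length ≤ m := by
    have := h.length_le; simpa [seqPrefix] using this
  rw [List.prefix_iff_eq_take] at h
  exact h.trans (by rw [seqPrefix_take ρ hlen])
  
end Aux

/-! ### Part 2: safety, combine, default strategies, hSPE basics -/

namespace Aux

attribute [local instance] Classical.propDecidable

variable {V C : Type}

/-- `w` has a prefix in `L`. -/
def VPref (L : Set (List C)) (w : List C) : Prop := ∃ u, u <+: w ∧ u ∈ L

lemma VPref.mono {L : Set (List C)} {w w' : List C} (h : w <+: w') (hv : VPref L w) :
    VPref L w' := by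
  obtain ⟨u, hu, huL⟩ := hv
  exact ⟨u, hu.trans h, huL⟩

/-- A play is safe for `L` iff no history along it is violating. -/
lemma play_safe_iff {L : Set (List C)} (O : Arena V C) (σ : List C → V → V)
    (w : List C) (v : V) :
    (∀ n, seqPrefix (O.play σ w v) n ∉ L) ↔ ∀ k, ¬ VPref L (O.stepSeq σ w v k).1 := by
  constructor
  · rintro hs k ⟨u, hu, huL⟩
    have hu2 : u <+: seqPrefix (O.play σ w v) (w.length + k) := by
      rw [seqPrefix_play]; exact hu
    have he := prefix_seqPrefix _ hu2
    exact hs u.length (he ▸ huL)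
  · intro hk n hn
    rcases le_or_gt n w.length with h | h
    · refine hk 0 ⟨seqPrefix (O.play σ w v) n, ?_, hn⟩
      have h0 : (O.stepSeq σ w v 0).1 = seqPrefix (O.play σ w v) w.length := by
        simpa using (seqPrefix_play O σ w v 0).symm
      rw [h0]
      exact seqPrefix_le _ h
    · refine hk (n - w.length) ⟨seqPrefix (O.play σ w v) n, ?_, hn⟩
      rw [← seqPrefix_play O σ w v (n - w.length)]
      have : w.length + (n - w.length) = n := by omega
      rw [this]
  
lemma not_safe_of_VPref {L : Set (List C)} (O : Arena V C) (σ : List C → V → V)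
    {w : List C} (v : V) (h : VPref L w) :
    ¬ (∀ n, seqPrefix (O.play σ w v) n ∉ L) := by
  rw [play_safe_iff]
  intro hk
  exact hk 0 h

lemma combine_mem1 (O : Arena V C) (σ1 σ2 : List C → V → V) (w : List C) {v : V}
    (h : v ∈ O.V1) : O.combine σ1 σ2 w v = σ1 w v := by
  simp [Arena.combine, h]

lemma combine_mem2 (O : Arena V C) (σ1 σ2 : List C → V → V) (w : List C) {v : V}
    (h : v ∉ O.V1) : O.combine σ1 σ2 w v = σ2 w v := by
  simp [Arena.combine, h]

lemma combine_valid {O : Arena V C} (hwf : O.WF) {σ1 σ2 : List C → V → V}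
    (h1 : O.Valid1 σ1) (h2 : O.Valid2 σ2) (w : List C) {v : V} (hv : v ∈ O.vertices) :
    (v, O.combine σ1 σ2 w v) ∈ O.E := by
  by_cases h : v ∈ O.V1
  · rw [combine_mem1 O σ1 σ2 w h]; exact h1 w v h
  · rw [combine_mem2 O σ1 σ2 w h]
    rcases hv with hv | hv
    · exact absurd hv h
    · exact h2 w v hv

lemma stepSeq_mem_vertices {O : Arena V C} (hwf : O.WF) {σ1 σ2 : List C → V → V}
    (h1 : O.Valid1 σ1) (h2 : O.Valid2 σ2) (w : List C) {v : V} (hv : v ∈ O.vertices) :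
    ∀ k, (O.stepSeq (O.combine σ1 σ2) w v k).2 ∈ O.vertices := by
  intro k
  induction k with
  | zero => exact hv
  | succ k ih =>
      rw [stepSeq_succ]
      exact (hwf.2.1 _ (combine_valid hwf h1 h2 _ ih)).2

/-- Default (positional) strategy: pick any successor. -/
noncomputable def dfltS (O : Arena V C) : List C → V → V :=
  fun _ v => if h : ∃ u, (v, u) ∈ O.E then h.choose else v

lemma dfltS_edge {O : Arena V C} (hwf : O.WF) {v : V} (hv : v ∈ O.vertices) (w : List C) :
    (v, dfltS O w v) ∈ O.E := by
  have h : ∃ u, (v, u) ∈ O.E := hwf.2.2 v hv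
  unfold dfltS
  rw [dif_pos h]
  exact h.choose_spec

lemma dfltS_valid1 {O : Arena V C} (hwf : O.WF) : O.Valid1 (dfltS O) :=
  fun w v hv => dfltS_edge hwf (Or.inl hv) w

lemma dfltS_valid2 {O : Arena V C} (hwf : O.WF) : O.Valid2 (dfltS O) :=
  fun w v hv => dfltS_edge hwf (Or.inr hv) w

lemma isFM_of_hist_free {Vi : Set V} (σ : List C → V → V)
    (h : ∀ w w' v, v ∈ Vi → σ w v = σ w' v) : Arena.IsFM Vi σ :=
  ⟨Unit, inferInstance, (), fun _ _ => (), fun _ v => σ [] v,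
    fun w v hv => h w [] v hv⟩

lemma dfltS_FM (O : Arena V C) (Vi : Set V) : Arena.IsFM Vi (dfltS O) :=
  isFM_of_hist_free _ (fun _ _ _ _ => rfl)

/-- Sufficient condition for hSPE: a pair of uniformly optimal strategies. -/
lemma isHSPE_of_optimal {O : Arena V C} {W : Set (ℕ → C)} {σ1 σ2 : List C → V → V}
    (h1 : O.Valid1 σ1) (h2 : O.Valid2 σ2)
    (h : ∀ (w : List C), ∀ v ∈ O.vertices, O.Winning1 W σ1 w v ∨ O.Winning2 W σ2 w v) :
    O.IsHSPE W σ1 σ2 := by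
  refine ⟨h1, h2, fun w v hv => ?_⟩
  rcases h w v hv with hw | hw
  · exact ⟨fun _ σ2' hσ2' => hw σ2' hσ2', fun hc => absurd (hw σ2 h2) hc⟩
  · exact ⟨fun hc => absurd hc (hw σ1 h1), fun _ σ1' hσ1' => hw σ1' hσ1'⟩

/-- From an hSPE: at each position the apparent winner has a winning strategy. -/
lemma optimal_of_isHSPE {O : Arena V C} {W : Set (ℕ → C)} {σ1 σ2 : List C → V → V}
    (h : O.IsHSPE W σ1 σ2) (w : List C) {v : V} (hv : v ∈ O.vertices) :
    (O.play (O.combine σ1 σ2) w v ∈ W ∧ O.Winning1 W σ1 w v) ∨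
    (O.play (O.combine σ1 σ2) w v ∉ W ∧ O.Winning2 W σ2 w v) := by
  by_cases hm : O.play (O.combine σ1 σ2) w v ∈ W
  · exact Or.inl ⟨hm, fun σ2' hσ2' => (h.2.2 w v hv).1 hm σ2' hσ2'⟩
  · exact Or.inr ⟨hm, fun σ1' hσ1' => (h.2.2 w v hv).2 hm σ1' hσ1'⟩

lemma wins1From_iff_of_isHSPE {O : Arena V C} {W : Set (ℕ → C)} {σ1 σ2 : List C → V → V}
    (h : O.IsHSPE W σ1 σ2) (w : List C) {v : V} (hv : v ∈ O.vertices) :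
    O.Wins1From W w v ↔ O.play (O.combine σ1 σ2) w v ∈ W := by
  constructor
  · rintro ⟨σ1', hσ1', hwin⟩
    by_contra hm
    rcases optimal_of_isHSPE h w hv with ⟨hm', _⟩ | ⟨_, hw2⟩
    · exact hm hm'
    · exact hw2 σ1' hσ1' (hwin σ2 h.2.1)
  · intro hm
    exact ⟨σ1, h.1, fun σ2' hσ2' => (h.2.2 w v hv).1 hm σ2' hσ2'⟩

/-- Games whose winning condition is trivial (contains all plays or none). -/
lemma constGame {O : Arena V C} (hwf : O.WF) (W : Set (ℕ → C))
    (hconst : (∀ ρ, ρ ∈ W) ∨ (∀ ρ, ρ ∉ W)) :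
    O.RegularlyPredictable W ∧ O.HasFMhSPE W := by
  constructor
  · intro v hv
    rcases hconst with hc | hc
    · exact ⟨Unit, inferInstance, ⟨fun _ _ => (), (), Set.univ⟩,
        fun w => by
          simp only [DFA.mem_accepts, Set.mem_univ, true_iff]
          exact ⟨dfltS O, dfltS_valid1 hwf, fun σ2 _ => hc _⟩⟩
    · refine ⟨Unit, inferInstance, ⟨fun _ _ => (), (), ∅⟩, fun w => ?_⟩
      simp only [DFA.mem_accepts, Set.mem_empty_iff_false, false_iff]
      rintro ⟨σ1, hσ1, hwin⟩
      exact hc _ (hwin (dfltS O) (dfltS_valid2 hwf))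
  · refine ⟨dfltS O, dfltS O, ?_, dfltS_FM O _, dfltS_FM O _⟩
    refine isHSPE_of_optimal (dfltS_valid1 hwf) (dfltS_valid2 hwf) (fun w v hv => ?_)
    rcases hconst with hc | hc
    · exact Or.inl (fun σ2 _ => hc _)
    · exact Or.inr (fun σ1 _ => hc _)

end Aux

/-! ### Part 3: DFA combinators -/

namespace Aux

attribute [local instance] Classical.propDecidable

variable {C : Type}

lemma DFA.eval_snoc {Q : Type} (A : DFA C Q) (w : List C) (c : C) :
    A.eval (w ++ [c]) = A.step (A.eval w) c := by
  simp [DFA.eval, DFA.evalFrom, List.foldl_append]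

/-- DFA tracking whether some prefix of the input is accepted. -/
def stickyDFA {Q : Type} (A : DFA C Q) : DFA C (Q × Prop) :=
  ⟨fun s c => (A.step s.1 c, s.2 ∨ A.step s.1 c ∈ A.accept),
   (A.start, A.start ∈ A.accept), {s | s.2}⟩

lemma stickyDFA_eval {Q : Type} (A : DFA C Q) {L : Set (List C)}
    (hA : ∀ w, w ∈ A.accepts ↔ w ∈ L) (w : List C) :
    (stickyDFA A).eval w = (A.eval w, VPref L w) := by
  induction w using List.reverseRecOn with
  | nil =>
      refine Prod.ext rfl ?_
      show (A.start ∈ A.accept) = VPref L []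
      apply propext
      constructor
      · intro h
        exact ⟨[], List.prefix_rfl, (hA []).1 h⟩
      · rintro ⟨u, hu, huL⟩
        rw [List.prefix_nil] at hu
        subst hu
        exact (hA []).2 huL
  | append_singleton w c ih =>
      rw [DFA.eval_snoc, DFA.eval_snoc, ih]
      refine Prod.ext rfl ?_
      show (VPref L w ∨ A.step (A.eval w) c ∈ A.accept) = VPref L (w ++ [c])
      have hwc : (A.step (A.eval w) c ∈ A.accept) ↔ (w ++ [c]) ∈ L := by
        rw [← hA (w ++ [c])]
        show _ ↔ A.eval (w ++ [c]) ∈ A.accept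
        rw [DFA.eval_snoc]
      apply propext
      constructor
      · rintro (h | h)
        · exact h.mono (List.prefix_append _ _)
        · exact ⟨w ++ [c], List.prefix_rfl, hwc.1 h⟩
      · rintro ⟨u, hu, huL⟩
        rcases List.prefix_concat_iff.1 hu with h | h
        · subst h
          exact Or.inr (hwc.2 huL)
        · exact Or.inl ⟨u, h, huL⟩

/-- Product of two DFAs (acceptance irrelevant). -/
def pairDFA {Q1 Q2 : Type} (A : DFA C Q1) (B : DFA C Q2) : DFA C (Q1 × Q2) :=
  ⟨fun s c => (A.step s.1 c, B.step s.2 c), (A.start, B.start), ∅⟩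

lemma pairDFA_eval {Q1 Q2 : Type} (A : DFA C Q1) (B : DFA C Q2) (w : List C) :
    (pairDFA A B).eval w = (A.eval w, B.eval w) := by
  induction w using List.reverseRecOn with
  | nil => rfl
  | append_singleton w c ih => rw [DFA.eval_snoc, DFA.eval_snoc, DFA.eval_snoc, ih]; rfl

/-- Product of a family of DFAs (acceptance irrelevant). -/
def piDFA {I : Type} {Q : I → Type} (D : ∀ i, DFA C (Q i)) : DFA C (∀ i, Q i) :=
  ⟨fun s c i => (D i).step (s i) c, fun i => (D i).start, ∅⟩

lemma piDFA_eval {I : Type} {Q : I → Type} (D : ∀ i, DFA C (Q i)) (w : List C) (i : I) :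
    (piDFA D).eval w i = (D i).eval w := by
  induction w using List.reverseRecOn with
  | nil => rfl
  | append_singleton w c ih => rw [DFA.eval_snoc, DFA.eval_snoc]; show (D i).step _ c = _; rw [ih]

lemma foldl_pair {A B : Type} (f : A → C → A) (g : B → C → B) (w : List C) (a : A) (b : B) :
    w.foldl (fun s c => (f s.1 c, g s.2 c)) (a, b) = (w.foldl f a, w.foldl g b) := by
  induction w generalizing a b with
  | nil => rfl
  | cons c w ih => simp only [List.foldl_cons]; rw [ih]

lemma eval_eq_foldl {Q : Type} (A : DFA C Q) (w : List C) :
    A.eval w = w.foldl A.step A.start := rfl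

end Aux

/-! ### Part 4: Boolean combinations of winning conditions; `Rl` helpers -/

namespace Aux

attribute [local instance] Classical.propDecidable

variable {C : Type}

/-- Membership in `𝒲` up to trivial conditions. -/
def MemBig (𝒲 : Set (Set (ℕ → C))) (X : Set (ℕ → C)) : Prop :=
  X ∈ 𝒲 ∨ X = ∅ ∨ X = Set.univ


variable {𝒲 : Set (Set (ℕ → C))}

lemma MemBig.compl (hc : ∀ W ∈ 𝒲, Wᶜ ∈ 𝒲) {X : Set (ℕ → C)} (h : MemBig 𝒲 X) :
    MemBig 𝒲 Xᶜ := by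
  rcases h with h | h | h
  · exact Or.inl (hc X h)
  · subst h; right; right; simp
  · subst h; right; left; simp

lemma MemBig.union (hu : ∀ W ∈ 𝒲, ∀ W' ∈ 𝒲, W ∪ W' ∈ 𝒲) {X Y : Set (ℕ → C)}
    (h : MemBig 𝒲 X) (h' : MemBig 𝒲 Y) : MemBig 𝒲 (X ∪ Y) := by
  rcases h with h | h | h
  · rcases h' with h' | h' | h'
    · exact Or.inl (hu X h Y h')
    · subst h'; rw [Set.union_empty]; exact Or.inl h
    · subst h'; rw [Set.union_univ]; right; right; rfl
  · subst h; rw [Set.empty_union]; exact h'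
  · subst h; rw [Set.univ_union]; right; right; rfl

lemma MemBig.inter (hc : ∀ W ∈ 𝒲, Wᶜ ∈ 𝒲) (hu : ∀ W ∈ 𝒲, ∀ W' ∈ 𝒲, W ∪ W' ∈ 𝒲)
    {X Y : Set (ℕ → C)} (h : MemBig 𝒲 X) (h' : MemBig 𝒲 Y) :
    MemBig 𝒲 (X ∩ Y) := by
  have := (MemBig.union hu (MemBig.compl hc h) (MemBig.compl hc h')).compl hc
  rwa [Set.compl_union, compl_compl, compl_compl] at this

/-- Any Boolean combination of members of `𝒲` is in `𝒲` or trivial. -/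
lemma memBig_boolcombo (hc : ∀ W ∈ 𝒲, Wᶜ ∈ 𝒲) (hu : ∀ W ∈ 𝒲, ∀ W' ∈ 𝒲, W ∪ W' ∈ 𝒲) :
    ∀ (k : ℕ) (Ws : Fin k → Set (ℕ → C)),
    (∀ i, Ws i ∈ 𝒲) → ∀ (ψ : (Fin k → Prop) → Prop),
    MemBig 𝒲 {ρ | ψ (fun i => ρ ∈ Ws i)} := by
  intro k
  induction k with
  | zero =>
      intro Ws hWs ψ
      have harg : ∀ ρ : ℕ → C, (fun i : Fin 0 => ρ ∈ Ws i) = (fun i : Fin 0 => i.elim0) :=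
        fun ρ => funext fun i => i.elim0
      by_cases h : ψ (fun i : Fin 0 => i.elim0)
      · right; right
        apply Set.eq_univ_iff_forall.2
        intro ρ
        show ψ _
        rw [harg ρ]
        exact h
      · right; left
        apply Set.eq_empty_iff_forall_notMem.2
        intro ρ hρ
        apply h
        have : ψ (fun i : Fin 0 => ρ ∈ Ws i) := hρ
        rwa [harg ρ] at this
  | succ k ih =>
      intro Ws hWs ψ
      have hargT : ∀ ρ : ℕ → C, ρ ∈ Ws (Fin.last k) →
          (fun i => ρ ∈ Ws i) = Fin.snoc (fun i : Fin k => ρ ∈ Ws i.castSucc) True := by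
        intro ρ hl
        refine funext fun i => ?_
        refine Fin.lastCases ?_ (fun j => ?_) i
        · rw [Fin.snoc_last]; exact propext (iff_true_intro hl)
        · rw [Fin.snoc_castSucc]
      have hargF : ∀ ρ : ℕ → C, ρ ∉ Ws (Fin.last k) →
          (fun i => ρ ∈ Ws i) = Fin.snoc (fun i : Fin k => ρ ∈ Ws i.castSucc) False := by
        intro ρ hl
        refine funext fun i => ?_
        refine Fin.lastCases ?_ (fun j => ?_) i
        · rw [Fin.snoc_last]; exact propext (iff_false_intro hl)
        · rw [Fin.snoc_castSucc]
      have key : {ρ | ψ (fun i => ρ ∈ Ws i)} =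
          ({ρ | ψ (Fin.snoc (fun i : Fin k => ρ ∈ Ws i.castSucc) True)} ∩ Ws (Fin.last k)) ∪
          ({ρ | ψ (Fin.snoc (fun i : Fin k => ρ ∈ Ws i.castSucc) False)} ∩ (Ws (Fin.last k))ᶜ) := by
        ext ρ
        constructor
        · intro hρ
          have hρ' : ψ (fun i => ρ ∈ Ws i) := hρ
          by_cases hl : ρ ∈ Ws (Fin.last k)
          · left
            refine ⟨?_, hl⟩
            show ψ (Fin.snoc (fun i : Fin k => ρ ∈ Ws i.castSucc) True)
            rw [← hargT ρ hl]
            exact hρ'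
          · right
            refine ⟨?_, hl⟩
            show ψ (Fin.snoc (fun i : Fin k => ρ ∈ Ws i.castSucc) False)
            rw [← hargF ρ hl]
            exact hρ'
        · rintro (⟨hρ, hl⟩ | ⟨hρ, hl⟩)
          · show ψ _
            rw [hargT ρ hl]
            exact hρ
          · show ψ _
            rw [hargF ρ hl]
            exact hρ
      rw [key]
      have h1 := ih (fun i => Ws i.castSucc) (fun i => hWs _)
        (fun x => ψ (Fin.snoc x True))
      have h2 := ih (fun i => Ws i.castSucc) (fun i => hWs _)
        (fun x => ψ (Fin.snoc x False))
      exact MemBig.union hu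
        (MemBig.inter hc hu h1 (Or.inl (hWs (Fin.last k))))
        (MemBig.inter hc hu h2 (MemBig.compl hc (Or.inl (hWs (Fin.last k)))))



/-- Rewriting a condition in `Rl 𝒲 (l+1)` when the last safety constraint has a fixed
truth value. -/
lemma snoc_safety_eq {l : ℕ} (y : Fin (l + 1) → Prop) (h : y (Fin.last l)) :
    y = Fin.snoc (fun j : Fin l => y j.castSucc) True := by
  refine funext fun i => ?_
  refine Fin.lastCases ?_ (fun j => ?_) i
  · rw [Fin.snoc_last]; exact propext (iff_true_intro h)
  · rw [Fin.snoc_castSucc]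

lemma snoc_safety_eq_false {l : ℕ} (y : Fin (l + 1) → Prop) (h : ¬ y (Fin.last l)) :
    y = Fin.snoc (fun j : Fin l => y j.castSucc) False := by
  refine funext fun i => ?_
  refine Fin.lastCases ?_ (fun j => ?_) i
  · rw [Fin.snoc_last]; exact propext (iff_false_intro h)
  · rw [Fin.snoc_castSucc]

end Aux

/-! ### Part 5: the core construction for one regular safety language -/

namespace Aux

attribute [local instance] Classical.propDecidable

variable {V C : Type} (O : Arena V C) {SB : Type} (BigD : DFA C SB)

/-- Edge relation of the product arena. -/
lemma prod_edge_iff (p p' : V × SB) :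
    (p, p') ∈ (O.prodDFA BigD).E ↔ (p.1, p'.1) ∈ O.E ∧ p'.2 = BigD.step p.2 (O.Γ p.1) :=
  Iff.rfl

lemma prod_V1_iff (p : V × SB) : p ∈ (O.prodDFA BigD).V1 ↔ p.1 ∈ O.V1 := by
  constructor
  · rintro ⟨h, _⟩; exact h
  · intro h; exact ⟨h, Set.mem_univ _⟩

lemma prod_V2_iff (p : V × SB) : p ∈ (O.prodDFA BigD).V2 ↔ p.1 ∈ O.V2 := by
  constructor
  · rintro ⟨h, _⟩; exact h
  · intro h; exact ⟨h, Set.mem_univ _⟩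

lemma prod_vertices_iff (p : V × SB) :
    p ∈ (O.prodDFA BigD).vertices ↔ p.1 ∈ O.vertices := by
  unfold Arena.vertices
  rw [Set.mem_union, Set.mem_union, prod_V1_iff, prod_V2_iff]

lemma prod_gamma (p : V × SB) : (O.prodDFA BigD).Γ p = O.Γ p.1 := rfl

variable (Vb : SB → Prop) (FP : V × SB → Prop)

/-- Product positions consistent with some history. -/
def Rset : Set (V × SB) := {p | p.1 ∈ O.vertices ∧ ∃ w : List C, BigD.eval w = p.2}

/-- Violated positions where Player 1 wins the `W_F` game. -/
def Gset : Set (V × SB) := {p | p ∈ Rset O BigD ∧ Vb p.2 ∧ FP p}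

/-- Violated positions where Player 1 does not win the `W_F` game. -/
def Bad2 : Set (V × SB) := {p | p ∈ Rset O BigD ∧ Vb p.2 ∧ ¬ FP p}

/-- Non-violated consistent positions. -/
def SafeR : Set (V × SB) := {p | p ∈ Rset O BigD ∧ ¬ Vb p.2}

/-- Player 1's attractor towards `Gset` through the safe region. -/
def AttrA : ℕ → Set (V × SB)
  | 0 => Gset O BigD Vb FP
  | n + 1 => AttrA n ∪ {p | p ∈ SafeR O BigD Vb ∧
      ((p.1 ∈ O.V1 ∧ ∃ p', (p, p') ∈ (O.prodDFA BigD).E ∧ p' ∈ AttrA n) ∨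
       (p.1 ∈ O.V2 ∧ ∀ p', (p, p') ∈ (O.prodDFA BigD).E → p' ∈ AttrA n))}

def AAset : Set (V × SB) := ⋃ n, AttrA O BigD Vb FP n

/-- Player 2's attractor towards `Bad2` through the safe region, avoiding `AAset`. -/
def AttrB : ℕ → Set (V × SB)
  | 0 => Bad2 O BigD Vb FP
  | n + 1 => AttrB n ∪ {p | p ∈ SafeR O BigD Vb ∧ p ∉ AAset O BigD Vb FP ∧
      ((p.1 ∈ O.V2 ∧ ∃ p', (p, p') ∈ (O.prodDFA BigD).E ∧ p' ∈ AttrB n) ∨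
       (p.1 ∈ O.V1 ∧ ∀ p', (p, p') ∈ (O.prodDFA BigD).E → p' ∈ AttrB n))}

def BBset : Set (V × SB) := ⋃ n, AttrB O BigD Vb FP n

/-- The safe core where neither player can force exiting favourably. -/
def ZZset : Set (V × SB) :=
  {p | p ∈ SafeR O BigD Vb ∧ p ∉ AAset O BigD Vb FP ∧ p ∉ BBset O BigD Vb FP}

lemma attrA_le_succ (n : ℕ) : AttrA O BigD Vb FP n ⊆ AttrA O BigD Vb FP (n+1) :=
  Set.subset_union_left

lemma attrA_mono {m n : ℕ} (h : m ≤ n) : AttrA O BigD Vb FP m ⊆ AttrA O BigD Vb FP n := by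
  induction h with
  | refl => exact subset_rfl
  | step _ ih => exact ih.trans (attrA_le_succ ..)

lemma attrB_le_succ (n : ℕ) : AttrB O BigD Vb FP n ⊆ AttrB O BigD Vb FP (n+1) :=
  Set.subset_union_left

lemma attrB_mono {m n : ℕ} (h : m ≤ n) : AttrB O BigD Vb FP m ⊆ AttrB O BigD Vb FP n := by
  induction h with
  | refl => exact subset_rfl
  | step _ ih => exact ih.trans (attrB_le_succ ..)

/-- Finite subsets of an increasing union are inside one stage. -/
lemma finite_subset_iUnion {X : Type} {S : ℕ → Set X} (hS : ∀ n, S n ⊆ S (n+1))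
    {T : Set X} (hT : T.Finite) (h : T ⊆ ⋃ n, S n) : ∃ n, T ⊆ S n := by
  have hmono : ∀ {m n : ℕ}, m ≤ n → S m ⊆ S n := by
    intro m n hmn
    induction hmn with
    | refl => exact subset_rfl
    | step _ ih => exact ih.trans (hS _)
  revert h
  refine Set.Finite.induction_on (motive := fun T _ => T ⊆ ⋃ n, S n → ∃ n, T ⊆ S n) T hT ?_ ?_
  · exact fun _ => ⟨0, Set.empty_subset _⟩
  · intro a T ha hTf ih h
    obtain ⟨n, hn⟩ := ih (Set.Subset.trans (Set.subset_insert a T) h)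
    obtain ⟨_, ⟨m, rfl⟩, hm⟩ := h (Set.mem_insert a T)
    refine ⟨max m n, Set.insert_subset ?_ (hn.trans (hmono (le_max_right m n)))⟩
    exact hmono (le_max_left m n) hm

lemma mem_rset_pos {v : V} (hv : v ∈ O.vertices) (w : List C) :
    (v, BigD.eval w) ∈ Rset O BigD := ⟨hv, w, rfl⟩

lemma rset_closed (hwf : O.WF) {p p' : V × SB} (hp : p ∈ Rset O BigD)
    (he : (p, p') ∈ (O.prodDFA BigD).E) : p' ∈ Rset O BigD := by
  obtain ⟨hv, w, hw⟩ := hp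
  obtain ⟨heO, hst⟩ := (prod_edge_iff O BigD p p').1 he
  refine ⟨(hwf.2.1 _ heO).2, w ++ [O.Γ p.1], ?_⟩
  rw [DFA.eval_snoc, hw, hst]

/-- Classification of consistent positions. -/
lemma rset_cases {p : V × SB} (hp : p ∈ Rset O BigD) :
    p ∈ Gset O BigD Vb FP ∨ p ∈ Bad2 O BigD Vb FP ∨ p ∈ SafeR O BigD Vb := by
  by_cases hv : Vb p.2
  · by_cases hf : FP p
    · exact Or.inl ⟨hp, hv, hf⟩
    · exact Or.inr (Or.inl ⟨hp, hv, hf⟩)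
  · exact Or.inr (Or.inr ⟨hp, hv⟩)

/-- Successors of a Player-1 vertex in the core avoid `AAset`. -/
lemma zz_succ_own1 {p p' : V × SB} (hp : p ∈ ZZset O BigD Vb FP) (h1 : p.1 ∈ O.V1)
    (he : (p, p') ∈ (O.prodDFA BigD).E) : p' ∉ AAset O BigD Vb FP := by
  rintro ⟨_, ⟨n, rfl⟩, hn⟩
  exact hp.2.1 ⟨_, ⟨n + 1, rfl⟩, Or.inr ⟨hp.1, Or.inl ⟨h1, p', he, hn⟩⟩⟩

/-- Successors of a Player-2 vertex in the core avoid `BBset`. -/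
lemma zz_succ_own2 {p p' : V × SB} (hp : p ∈ ZZset O BigD Vb FP) (h2 : p.1 ∈ O.V2)
    (he : (p, p') ∈ (O.prodDFA BigD).E) : p' ∉ BBset O BigD Vb FP := by
  rintro ⟨_, ⟨n, rfl⟩, hn⟩
  exact hp.2.2 ⟨_, ⟨n + 1, rfl⟩, Or.inr ⟨hp.1, hp.2.1, Or.inl ⟨h2, p', he, hn⟩⟩⟩

/-- In the core, Player 1 moves stay in `ZZ ∪ BB`. -/
lemma zz_succ_own1_mem (hwf : O.WF) {p p' : V × SB} (hp : p ∈ ZZset O BigD Vb FP)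
    (h1 : p.1 ∈ O.V1) (he : (p, p') ∈ (O.prodDFA BigD).E) :
    p' ∈ ZZset O BigD Vb FP ∪ BBset O BigD Vb FP := by
  have hpR : p' ∈ Rset O BigD := rset_closed O BigD hwf hp.1.1 he
  have hnA : p' ∉ AAset O BigD Vb FP := zz_succ_own1 O BigD Vb FP hp h1 he
  rcases rset_cases O BigD Vb FP hpR with hg | hb | hs
  · exact absurd ⟨_, ⟨0, rfl⟩, hg⟩ hnA
  · exact Or.inr ⟨_, ⟨0, rfl⟩, hb⟩
  · by_cases hB : p' ∈ BBset O BigD Vb FP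
    · exact Or.inr hB
    · exact Or.inl ⟨hs, hnA, hB⟩

/-- In the core, Player 2 moves stay in `ZZ ∪ AA`. -/
lemma zz_succ_own2_mem (hwf : O.WF) {p p' : V × SB} (hp : p ∈ ZZset O BigD Vb FP)
    (h2 : p.1 ∈ O.V2) (he : (p, p') ∈ (O.prodDFA BigD).E) :
    p' ∈ ZZset O BigD Vb FP ∪ AAset O BigD Vb FP := by
  have hpR : p' ∈ Rset O BigD := rset_closed O BigD hwf hp.1.1 he
  have hnB : p' ∉ BBset O BigD Vb FP := zz_succ_own2 O BigD Vb FP hp h2 he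
  rcases rset_cases O BigD Vb FP hpR with hg | hb | hs
  · exact Or.inr ⟨_, ⟨0, rfl⟩, hg⟩
  · exact absurd ⟨_, ⟨0, rfl⟩, hb⟩ hnB
  · by_cases hA : p' ∈ AAset O BigD Vb FP
    · exact Or.inr hA
    · exact Or.inl ⟨hs, hA, hnB⟩

lemma rset_subset_vertices {p : V × SB} (hp : p ∈ Rset O BigD) :
    p ∈ (O.prodDFA BigD).vertices := (prod_vertices_iff O BigD p).2 hp.1

/-- The core satisfies the restriction condition. -/
lemma zz_closure (hwf : O.WF) (hPwf : (O.prodDFA BigD).WF)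
    (hPfin : (O.prodDFA BigD).vertices.Finite) :
    ∀ p ∈ ZZset O BigD Vb FP, ∃ p' ∈ ZZset O BigD Vb FP, (p, p') ∈ (O.prodDFA BigD).E := by
  intro p hp
  have hpv : p ∈ (O.prodDFA BigD).vertices := rset_subset_vertices O BigD hp.1.1
  have hsuccfin : {p' | (p, p') ∈ (O.prodDFA BigD).E}.Finite :=
    hPfin.subset (fun p' he => (hPwf.2.1 _ he).2)
  have hp1 : p.1 ∈ O.vertices := hp.1.1.1
  rcases hp1 with h1 | h2
  · -- Player 1 vertex: not all successors in BB
    by_contra hno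
    push_neg at hno
    have hall : {p' | (p, p') ∈ (O.prodDFA BigD).E} ⊆ BBset O BigD Vb FP := by
      intro p' he
      rcases zz_succ_own1_mem O BigD Vb FP hwf hp h1 he with h | h
      · exact absurd h (fun hz => (hno p' hz) he)
      · exact h
    obtain ⟨n, hn⟩ := finite_subset_iUnion (attrB_le_succ O BigD Vb FP) hsuccfin hall
    exact hp.2.2 ⟨_, ⟨n + 1, rfl⟩, Or.inr ⟨hp.1, hp.2.1,
      Or.inr ⟨h1, fun p' he => hn he⟩⟩⟩
  · -- Player 2 vertex: not all successors in AA
    by_contra hno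
    push_neg at hno
    have hall : {p' | (p, p') ∈ (O.prodDFA BigD).E} ⊆ AAset O BigD Vb FP := by
      intro p' he
      rcases zz_succ_own2_mem O BigD Vb FP hwf hp h2 he with h | h
      · exact absurd h (fun hz => (hno p' hz) he)
      · exact h
    obtain ⟨n, hn⟩ := finite_subset_iUnion (attrA_le_succ O BigD Vb FP) hsuccfin hall
    exact hp.2.1 ⟨_, ⟨n + 1, rfl⟩, Or.inr ⟨hp.1, Or.inr ⟨h2, fun p' he => hn he⟩⟩⟩

end Aux

/-! ### Part 6: the equilibrium strategies -/

namespace Aux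

attribute [local instance] Classical.propDecidable

variable {V C : Type} (O : Arena V C) {SB : Type} (BigD : DFA C SB)
  (Vb : SB → Prop) (FP : V × SB → Prop)

/-- Attractor move for Player 1. -/
noncomputable def amove1 (p : V × SB) : V :=
  if h : ∃ n, ∃ p', (p, p') ∈ (O.prodDFA BigD).E ∧ p' ∈ AttrA O BigD Vb FP n then
    (Nat.find_spec h).choose.1
  else p.1

lemma amove1_spec {p : V × SB}
    (h : ∃ n, ∃ p', (p, p') ∈ (O.prodDFA BigD).E ∧ p' ∈ AttrA O BigD Vb FP n) :
    (p, (amove1 O BigD Vb FP p, BigD.step p.2 (O.Γ p.1))) ∈ (O.prodDFA BigD).E ∧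
    (amove1 O BigD Vb FP p, BigD.step p.2 (O.Γ p.1)) ∈ AttrA O BigD Vb FP (Nat.find h) := by
  have hs := (Nat.find_spec h).choose_spec
  have hpair : (Nat.find_spec h).choose
      = (amove1 O BigD Vb FP p, BigD.step p.2 (O.Γ p.1)) := by
    have h2 := ((prod_edge_iff O BigD _ _).1 hs.1).2
    have h1 : amove1 O BigD Vb FP p = (Nat.find_spec h).choose.1 := by
      unfold amove1; rw [dif_pos h]
    exact Prod.ext h1.symm h2
  rw [← hpair]
  exact hs

lemma amove1_find_le {p : V × SB} {n : ℕ}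
    (hn : ∃ p', (p, p') ∈ (O.prodDFA BigD).E ∧ p' ∈ AttrA O BigD Vb FP n) :
    Nat.find (⟨n, hn⟩ : ∃ n, ∃ p', (p, p') ∈ (O.prodDFA BigD).E ∧
      p' ∈ AttrA O BigD Vb FP n) ≤ n :=
  Nat.find_min' _ hn

/-- Attractor move for Player 2. -/
noncomputable def amove2 (p : V × SB) : V :=
  if h : ∃ n, ∃ p', (p, p') ∈ (O.prodDFA BigD).E ∧ p' ∈ AttrB O BigD Vb FP n then
    (Nat.find_spec h).choose.1
  else p.1

lemma amove2_spec {p : V × SB}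
    (h : ∃ n, ∃ p', (p, p') ∈ (O.prodDFA BigD).E ∧ p' ∈ AttrB O BigD Vb FP n) :
    (p, (amove2 O BigD Vb FP p, BigD.step p.2 (O.Γ p.1))) ∈ (O.prodDFA BigD).E ∧
    (amove2 O BigD Vb FP p, BigD.step p.2 (O.Γ p.1)) ∈ AttrB O BigD Vb FP (Nat.find h) := by
  have hs := (Nat.find_spec h).choose_spec
  have hpair : (Nat.find_spec h).choose
      = (amove2 O BigD Vb FP p, BigD.step p.2 (O.Γ p.1)) := by
    have h2 := ((prod_edge_iff O BigD _ _).1 hs.1).2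
    have h1 : amove2 O BigD Vb FP p = (Nat.find_spec h).choose.1 := by
      unfold amove2; rw [dif_pos h]
    exact Prod.ext h1.symm h2
  rw [← hpair]
  exact hs

/-- If a non-violated Player-1 vertex is in the attractor, it has a move into it. -/
lemma exists_attrA_succ (hwf : O.WF) {p : V × SB} (hA : p ∈ AAset O BigD Vb FP)
    (hnv : ¬ Vb p.2) (h1 : p.1 ∈ O.V1) :
    ∃ n, ∃ p', (p, p') ∈ (O.prodDFA BigD).E ∧ p' ∈ AttrA O BigD Vb FP n := by
  obtain ⟨_, ⟨n, rfl⟩, hn⟩ := hA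
  have hfound : ∃ n, p ∈ AttrA O BigD Vb FP n := ⟨n, hn⟩
  have hmem := Nat.find_spec hfound
  cases hfind : Nat.find hfound with
  | zero =>
      rw [hfind] at hmem
      exact absurd hmem.2.1 hnv
  | succ m' =>
      rw [hfind] at hmem
      rcases hmem with hmem | hmem
      · exact absurd hmem (Nat.find_min hfound (by omega))
      · rcases hmem.2 with ⟨_, p', he, hp'⟩ | ⟨hv2, _⟩
        · exact ⟨m', p', he, hp'⟩
        · exact (Set.disjoint_left.1 hwf.1 h1 hv2).elim

lemma exists_attrB_succ (hwf : O.WF) {p : V × SB} (hB : p ∈ BBset O BigD Vb FP)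
    (hnv : ¬ Vb p.2) (h2 : p.1 ∈ O.V2) :
    ∃ n, ∃ p', (p, p') ∈ (O.prodDFA BigD).E ∧ p' ∈ AttrB O BigD Vb FP n := by
  obtain ⟨_, ⟨n, rfl⟩, hn⟩ := hB
  have hfound : ∃ n, p ∈ AttrB O BigD Vb FP n := ⟨n, hn⟩
  have hmem := Nat.find_spec hfound
  cases hfind : Nat.find hfound with
  | zero =>
      rw [hfind] at hmem
      exact absurd hmem.2.1 hnv
  | succ m' =>
      rw [hfind] at hmem
      rcases hmem with hmem | hmem
      · exact absurd hmem (Nat.find_min hfound (by omega))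
      · rcases hmem.2.2 with ⟨_, p', he, hp'⟩ | ⟨hv1, _⟩
        · exact ⟨m', p', he, hp'⟩
        · exact (Set.disjoint_left.1 hwf.1 hv1 h2).elim

variable (τ1 τ2 : List C → V → V) (θ1 θ2 : List C → (V × SB) → (V × SB))

/-- Player 1's global strategy. -/
noncomputable def sig1 : List C → V → V := fun w v =>
  if Vb (BigD.eval w) then τ1 w v
  else if (v, BigD.eval w) ∈ AAset O BigD Vb FP then amove1 O BigD Vb FP (v, BigD.eval w)
  else if (v, BigD.eval w) ∈ ZZset O BigD Vb FP then (θ1 w (v, BigD.eval w)).1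
  else dfltS O w v

/-- Player 2's global strategy. -/
noncomputable def sig2 : List C → V → V := fun w v =>
  if Vb (BigD.eval w) then τ2 w v
  else if (v, BigD.eval w) ∈ BBset O BigD Vb FP then amove2 O BigD Vb FP (v, BigD.eval w)
  else if (v, BigD.eval w) ∈ ZZset O BigD Vb FP then (θ2 w (v, BigD.eval w)).1
  else dfltS O w v

lemma restrict_E_mem {S : Set (V × SB)} {p p' : V × SB} :
    (p, p') ∈ ((O.prodDFA BigD).restrict S).E ↔
      (p, p') ∈ (O.prodDFA BigD).E ∧ p ∈ S ∧ p' ∈ S := by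
  unfold Arena.restrict
  constructor
  · rintro ⟨he, h1, h2⟩; exact ⟨he, h1, h2⟩
  · rintro ⟨he, h1, h2⟩; exact ⟨he, h1, h2⟩

lemma restrict_V1_mem {S : Set (V × SB)} {p : V × SB} :
    p ∈ ((O.prodDFA BigD).restrict S).V1 ↔ p.1 ∈ O.V1 ∧ p ∈ S := by
  unfold Arena.restrict
  rw [Set.mem_inter_iff, prod_V1_iff]

lemma restrict_V2_mem {S : Set (V × SB)} {p : V × SB} :
    p ∈ ((O.prodDFA BigD).restrict S).V2 ↔ p.1 ∈ O.V2 ∧ p ∈ S := by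
  unfold Arena.restrict
  rw [Set.mem_inter_iff, prod_V2_iff]

lemma restrict_vertices_mem {S : Set (V × SB)} {p : V × SB} :
    p ∈ ((O.prodDFA BigD).restrict S).vertices ↔ p.1 ∈ O.vertices ∧ p ∈ S := by
  unfold Arena.vertices
  rw [Set.mem_union, restrict_V1_mem, restrict_V2_mem, Set.mem_union]
  tauto

lemma sig1_valid (hwf : O.WF) (hτ1 : O.Valid1 τ1)
    (hθ1 : ((O.prodDFA BigD).restrict (ZZset O BigD Vb FP)).Valid1 θ1) :
    O.Valid1 (sig1 O BigD Vb FP τ1 θ1) := by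
  intro w v hv
  unfold sig1
  by_cases h1 : Vb (BigD.eval w)
  · rw [if_pos h1]; exact hτ1 w v hv
  · rw [if_neg h1]
    by_cases h2 : (v, BigD.eval w) ∈ AAset O BigD Vb FP
    · rw [if_pos h2]
      have hex := exists_attrA_succ O BigD Vb FP hwf h2 h1 hv
      have := (amove1_spec O BigD Vb FP hex).1
      exact ((prod_edge_iff O BigD _ _).1 this).1
    · rw [if_neg h2]
      by_cases h3 : (v, BigD.eval w) ∈ ZZset O BigD Vb FP
      · rw [if_pos h3]
        have hV1 : (v, BigD.eval w) ∈ ((O.prodDFA BigD).restrict (ZZset O BigD Vb FP)).V1 :=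
          (restrict_V1_mem O BigD).2 ⟨hv, h3⟩
        have := hθ1 w _ hV1
        have he := ((restrict_E_mem O BigD).1 this).1
        exact ((prod_edge_iff O BigD _ _).1 he).1
      · rw [if_neg h3]; exact dfltS_valid1 hwf w v hv

lemma sig2_valid (hwf : O.WF) (hτ2 : O.Valid2 τ2)
    (hθ2 : ((O.prodDFA BigD).restrict (ZZset O BigD Vb FP)).Valid2 θ2) :
    O.Valid2 (sig2 O BigD Vb FP τ2 θ2) := by
  intro w v hv
  unfold sig2
  by_cases h1 : Vb (BigD.eval w)
  · rw [if_pos h1]; exact hτ2 w v hv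
  · rw [if_neg h1]
    by_cases h2 : (v, BigD.eval w) ∈ BBset O BigD Vb FP
    · rw [if_pos h2]
      have hex := exists_attrB_succ O BigD Vb FP hwf h2 h1 hv
      have := (amove2_spec O BigD Vb FP hex).1
      exact ((prod_edge_iff O BigD _ _).1 this).1
    · rw [if_neg h2]
      by_cases h3 : (v, BigD.eval w) ∈ ZZset O BigD Vb FP
      · rw [if_pos h3]
        have hV2 : (v, BigD.eval w) ∈ ((O.prodDFA BigD).restrict (ZZset O BigD Vb FP)).V2 :=
          (restrict_V2_mem O BigD).2 ⟨hv, h3⟩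
        have := hθ2 w _ hV2
        have he := ((restrict_E_mem O BigD).1 this).1
        exact ((prod_edge_iff O BigD _ _).1 he).1
      · rw [if_neg h3]; exact dfltS_valid2 hwf w v hv

end Aux

/-! ### Part 7: main winning lemmas (violated region and attractors) -/

namespace Aux

attribute [local instance] Classical.propDecidable

variable {V C : Type} (O : Arena V C) {SB : Type} (BigD : DFA C SB)
  (Vb : SB → Prop) (FP : V × SB → Prop)
  (τ1 τ2 : List C → V → V) (θ1 θ2 : List C → (V × SB) → (V × SB))
  (L : Set (List C)) (WFc WT W' : Set (ℕ → C))

/-- After a violation, if Player 1 wins the `W_F` game he wins the `W'` game, playing σ1. -/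
lemma splice1
    (hVb : ∀ w, Vb (BigD.eval w) ↔ VPref L w)
    (hτ : O.IsHSPE WFc τ1 τ2)
    (hF : ∀ ρ, ¬(∀ n, seqPrefix ρ n ∉ L) → (ρ ∈ W' ↔ ρ ∈ WFc))
    (w : List C) {v : V} (hv : v ∈ O.vertices) (hviol : Vb (BigD.eval w))
    (hwin : O.Wins1From WFc w v) :
    O.Winning1 W' (sig1 O BigD Vb FP τ1 θ1) w v := by
  have hVP : VPref L w := (hVb w).1 hviol
  have hplay := (wins1From_iff_of_isHSPE hτ w hv).1 hwin
  have hW1 : O.Winning1 WFc τ1 w v := (hτ.2.2 w v hv).1 hplay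
  intro σ2' hσ2'
  have heq : O.play (O.combine (sig1 O BigD Vb FP τ1 θ1) σ2') w v
      = O.play (O.combine τ1 σ2') w v := by
    apply play_congr
    intro w' v' hpre
    by_cases hv1 : v' ∈ O.V1
    · rw [combine_mem1 O _ _ _ hv1, combine_mem1 O _ _ _ hv1]
      unfold sig1
      rw [if_pos ((hVb w').2 (hVP.mono hpre))]
    · rw [combine_mem2 O _ _ _ hv1, combine_mem2 O _ _ _ hv1]
  rw [heq]
  exact (hF _ (not_safe_of_VPref O _ v hVP)).2 (hW1 σ2' hσ2')

/-- After a violation, if Player 1 does not win the `W_F` game, Player 2 wins `W'`. -/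
lemma splice2
    (hVb : ∀ w, Vb (BigD.eval w) ↔ VPref L w)
    (hτ : O.IsHSPE WFc τ1 τ2)
    (hF : ∀ ρ, ¬(∀ n, seqPrefix ρ n ∉ L) → (ρ ∈ W' ↔ ρ ∈ WFc))
    (w : List C) {v : V} (hv : v ∈ O.vertices) (hviol : Vb (BigD.eval w))
    (hwin : ¬ O.Wins1From WFc w v) :
    O.Winning2 W' (sig2 O BigD Vb FP τ2 θ2) w v := by
  have hVP : VPref L w := (hVb w).1 hviol
  have hplay : O.play (O.combine τ1 τ2) w v ∉ WFc := by
    intro hmem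
    exact hwin ((wins1From_iff_of_isHSPE hτ w hv).2 hmem)
  have hW2 : O.Winning2 WFc τ2 w v := (hτ.2.2 w v hv).2 hplay
  intro σ1' hσ1'
  have heq : O.play (O.combine σ1' (sig2 O BigD Vb FP τ2 θ2)) w v
      = O.play (O.combine σ1' τ2) w v := by
    apply play_congr
    intro w' v' hpre
    by_cases hv1 : v' ∈ O.V1
    · rw [combine_mem1 O _ _ _ hv1, combine_mem1 O _ _ _ hv1]
    · rw [combine_mem2 O _ _ _ hv1, combine_mem2 O _ _ _ hv1]
      unfold sig2
      rw [if_pos ((hVb w').2 (hVP.mono hpre))]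
  rw [heq]
  intro hmem
  exact (hW2 σ1' hσ1') ((hF _ (not_safe_of_VPref O _ v hVP)).1 hmem)

/-- From the Player-1 attractor, σ1 wins the `W'` game. -/
lemma attr1_main (hwf : O.WF)
    (hVb : ∀ w, Vb (BigD.eval w) ↔ VPref L w)
    (hFP : ∀ (w : List C), ∀ v ∈ O.vertices, (FP (v, BigD.eval w) ↔ O.Wins1From WFc w v))
    (hτ : O.IsHSPE WFc τ1 τ2)
    (hF : ∀ ρ, ¬(∀ n, seqPrefix ρ n ∉ L) → (ρ ∈ W' ↔ ρ ∈ WFc)) :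
    ∀ (n : ℕ) (w : List C) (v : V), v ∈ O.vertices →
      (v, BigD.eval w) ∈ AttrA O BigD Vb FP n →
      O.Winning1 W' (sig1 O BigD Vb FP τ1 θ1) w v := by
  intro n
  induction n with
  | zero =>
      intro w v hv hg
      exact splice1 O BigD Vb FP τ1 τ2 θ1 L WFc W' hVb hτ hF w hv hg.2.1
        ((hFP w v hv).1 hg.2.2)
  | succ n ih =>
      intro w v hv hmem
      rcases hmem with hmem | ⟨hsafe, hcl⟩
      · exact ih w v hv hmem
      · intro σ2' hσ2'
        have hnv : ¬ Vb (BigD.eval w) := hsafe.2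
        rcases hcl with ⟨h1, hex⟩ | ⟨h2, hall⟩
        · -- Player 1 moves along the attractor
          have hAA : (v, BigD.eval w) ∈ AAset O BigD Vb FP :=
            ⟨_, ⟨n + 1, rfl⟩, Or.inr ⟨hsafe, Or.inl ⟨h1, hex⟩⟩⟩
          have hmv : O.combine (sig1 O BigD Vb FP τ1 θ1) σ2' w v
              = amove1 O BigD Vb FP (v, BigD.eval w) := by
            rw [combine_mem1 O _ _ _ h1]
            unfold sig1
            rw [if_neg hnv, if_pos hAA]
          have hfind : ∃ n, ∃ p', ((v, BigD.eval w), p') ∈ (O.prodDFA BigD).E ∧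
              p' ∈ AttrA O BigD Vb FP n := ⟨n, hex⟩
          obtain ⟨hedge, hattr⟩ := amove1_spec O BigD Vb FP hfind
          have hle : Nat.find hfind ≤ n := Nat.find_min' _ hex
          have hattr' := attrA_mono O BigD Vb FP hle hattr
          have hOedge := ((prod_edge_iff O BigD _ _).1 hedge).1
          have hvert : amove1 O BigD Vb FP (v, BigD.eval w) ∈ O.vertices :=
            (hwf.2.1 _ hOedge).2
          have hpos : BigD.eval (w ++ [O.Γ v]) = BigD.step (BigD.eval w) (O.Γ v) :=
            DFA.eval_snoc ..
          have := ih (w ++ [O.Γ v]) (amove1 O BigD Vb FP (v, BigD.eval w)) hvert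
            (by rw [hpos]; exact hattr') σ2' hσ2'
          rw [play_step, hmv]
          exact this
        · -- Player 2 is trapped
          have hnv1 : v ∉ O.V1 := fun h => Set.disjoint_left.1 hwf.1 h h2
          have hmv : O.combine (sig1 O BigD Vb FP τ1 θ1) σ2' w v = σ2' w v :=
            combine_mem2 O _ _ _ hnv1
          have hOedge : (v, σ2' w v) ∈ O.E := hσ2' w v h2
          have hPedge : ((v, BigD.eval w), (σ2' w v, BigD.step (BigD.eval w) (O.Γ v)))
              ∈ (O.prodDFA BigD).E := (prod_edge_iff O BigD _ _).2 ⟨hOedge, rfl⟩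
          have hattr' := hall _ hPedge
          have hvert : σ2' w v ∈ O.vertices := (hwf.2.1 _ hOedge).2
          have hpos : BigD.eval (w ++ [O.Γ v]) = BigD.step (BigD.eval w) (O.Γ v) :=
            DFA.eval_snoc ..
          have := ih (w ++ [O.Γ v]) (σ2' w v) hvert (by rw [hpos]; exact hattr') σ2' hσ2'
          rw [play_step, hmv]
          exact this

/-- From the Player-2 attractor, σ2 wins against `W'`. -/
lemma attr2_main (hwf : O.WF)
    (hVb : ∀ w, Vb (BigD.eval w) ↔ VPref L w)
    (hFP : ∀ (w : List C), ∀ v ∈ O.vertices, (FP (v, BigD.eval w) ↔ O.Wins1From WFc w v))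
    (hτ : O.IsHSPE WFc τ1 τ2)
    (hF : ∀ ρ, ¬(∀ n, seqPrefix ρ n ∉ L) → (ρ ∈ W' ↔ ρ ∈ WFc)) :
    ∀ (n : ℕ) (w : List C) (v : V), v ∈ O.vertices →
      (v, BigD.eval w) ∈ AttrB O BigD Vb FP n →
      O.Winning2 W' (sig2 O BigD Vb FP τ2 θ2) w v := by
  intro n
  induction n with
  | zero =>
      intro w v hv hg
      refine splice2 O BigD Vb FP τ1 τ2 θ2 L WFc W' hVb hτ hF w hv hg.2.1 ?_
      intro hwin
      exact hg.2.2 ((hFP w v hv).2 hwin)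
  | succ n ih =>
      intro w v hv hmem
      rcases hmem with hmem | ⟨hsafe, hnA, hcl⟩
      · exact ih w v hv hmem
      · intro σ1' hσ1'
        have hnv : ¬ Vb (BigD.eval w) := hsafe.2
        rcases hcl with ⟨h2, hex⟩ | ⟨h1, hall⟩
        · -- Player 2 moves along the attractor
          have hBB : (v, BigD.eval w) ∈ BBset O BigD Vb FP :=
            ⟨_, ⟨n + 1, rfl⟩, Or.inr ⟨hsafe, hnA, Or.inl ⟨h2, hex⟩⟩⟩
          have hnv1 : v ∉ O.V1 := fun h => Set.disjoint_left.1 hwf.1 h h2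
          have hmv : O.combine σ1' (sig2 O BigD Vb FP τ2 θ2) w v
              = amove2 O BigD Vb FP (v, BigD.eval w) := by
            rw [combine_mem2 O _ _ _ hnv1]
            unfold sig2
            rw [if_neg hnv, if_pos hBB]
          have hfind : ∃ n, ∃ p', ((v, BigD.eval w), p') ∈ (O.prodDFA BigD).E ∧
              p' ∈ AttrB O BigD Vb FP n := ⟨n, hex⟩
          obtain ⟨hedge, hattr⟩ := amove2_spec O BigD Vb FP hfind
          have hle : Nat.find hfind ≤ n := Nat.find_min' _ hex
          have hattr' := attrB_mono O BigD Vb FP hle hattr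
          have hOedge := ((prod_edge_iff O BigD _ _).1 hedge).1
          have hvert : amove2 O BigD Vb FP (v, BigD.eval w) ∈ O.vertices :=
            (hwf.2.1 _ hOedge).2
          have hpos : BigD.eval (w ++ [O.Γ v]) = BigD.step (BigD.eval w) (O.Γ v) :=
            DFA.eval_snoc ..
          have := ih (w ++ [O.Γ v]) (amove2 O BigD Vb FP (v, BigD.eval w)) hvert
            (by rw [hpos]; exact hattr') σ1' hσ1'
          rw [play_step, hmv]
          exact this
        · -- Player 1 is trapped
          have hmv : O.combine σ1' (sig2 O BigD Vb FP τ2 θ2) w v = σ1' w v :=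
            combine_mem1 O _ _ _ h1
          have hOedge : (v, σ1' w v) ∈ O.E := hσ1' w v h1
          have hPedge : ((v, BigD.eval w), (σ1' w v, BigD.step (BigD.eval w) (O.Γ v)))
              ∈ (O.prodDFA BigD).E := (prod_edge_iff O BigD _ _).2 ⟨hOedge, rfl⟩
          have hattr' := hall _ hPedge
          have hvert : σ1' w v ∈ O.vertices := (hwf.2.1 _ hOedge).2
          have hpos : BigD.eval (w ++ [O.Γ v]) = BigD.step (BigD.eval w) (O.Γ v) :=
            DFA.eval_snoc ..
          have := ih (w ++ [O.Γ v]) (σ1' w v) hvert (by rw [hpos]; exact hattr') σ1' hσ1'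
          rw [play_step, hmv]
          exact this

end Aux

/-! ### Part 8: main winning lemmas on the safe core -/

namespace Aux

attribute [local instance] Classical.propDecidable

variable {V C : Type} (O : Arena V C) {SB : Type} (BigD : DFA C SB)
  (Vb : SB → Prop) (FP : V × SB → Prop)
  (τ1 τ2 : List C → V → V) (θ1 θ2 : List C → (V × SB) → (V × SB))
  (L : Set (List C)) (WFc WT W' : Set (ℕ → C))

lemma zz1_main (hwf : O.WF) (hPwf : (O.prodDFA BigD).WF)
    (hPfin : (O.prodDFA BigD).vertices.Finite)
    (hVb : ∀ w, Vb (BigD.eval w) ↔ VPref L w)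
    (hFP : ∀ (w : List C), ∀ v ∈ O.vertices, (FP (v, BigD.eval w) ↔ O.Wins1From WFc w v))
    (hτ : O.IsHSPE WFc τ1 τ2)
    (hθ : ((O.prodDFA BigD).restrict (ZZset O BigD Vb FP)).IsHSPE WT θ1 θ2)
    (hT : ∀ ρ, (∀ n, seqPrefix ρ n ∉ L) → (ρ ∈ W' ↔ ρ ∈ WT))
    (hF : ∀ ρ, ¬(∀ n, seqPrefix ρ n ∉ L) → (ρ ∈ W' ↔ ρ ∈ WFc))
    (w : List C) {v : V} (hv : v ∈ O.vertices)
    (hzz : (v, BigD.eval w) ∈ ZZset O BigD Vb FP)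
    (htrig : ((O.prodDFA BigD).restrict (ZZset O BigD Vb FP)).play
      (((O.prodDFA BigD).restrict (ZZset O BigD Vb FP)).combine θ1 θ2) w (v, BigD.eval w) ∈ WT) :
    O.Winning1 W' (sig1 O BigD Vb FP τ1 θ1) w v := by
  intro σ2' hσ2'
  set Prest := (O.prodDFA BigD).restrict (ZZset O BigD Vb FP) with hPrest
  have hσ1gv : O.Valid1 (sig1 O BigD Vb FP τ1 θ1) :=
    sig1_valid O BigD Vb FP τ1 θ1 hwf hτ.1 hθ.1
  set σc := O.combine (sig1 O BigD Vb FP τ1 θ1) σ2' with hσc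
  have hvert : ∀ k, (O.stepSeq σc w v k).2 ∈ O.vertices :=
    stepSeq_mem_vertices hwf hσ1gv hσ2' w hv
  set wk := fun k => (O.stepSeq σc w v k).1 with hwk
  set vk := fun k => (O.stepSeq σc w v k).2 with hvk
  set pk := fun k => ((vk k : V), BigD.eval (wk k)) with hpk
  have hwstep : ∀ k, wk (k+1) = wk k ++ [O.Γ (vk k)] := fun k => rfl
  have hvstep : ∀ k, vk (k+1) = σc (wk k) (vk k) := fun k => rfl
  have hevalstep : ∀ k, BigD.eval (wk (k+1)) = BigD.step (BigD.eval (wk k)) (O.Γ (vk k)) :=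
    fun k => by rw [hwstep k, DFA.eval_snoc]
  -- Player-1 step inside the core
  have hstep1 : ∀ k, pk k ∈ ZZset O BigD Vb FP → vk k ∈ O.V1 →
      pk (k+1) = θ1 (wk k) (pk k) ∧ pk (k+1) ∈ ZZset O BigD Vb FP := by
    intro k hkz hk1
    have hnb : ¬ Vb (BigD.eval (wk k)) := hkz.1.2
    have hnA : ((vk k : V), BigD.eval (wk k)) ∉ AAset O BigD Vb FP := hkz.2.1
    have hZ : ((vk k : V), BigD.eval (wk k)) ∈ ZZset O BigD Vb FP := hkz
    have hmv : σc (wk k) (vk k) = (θ1 (wk k) (pk k)).1 := by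
      rw [hσc, combine_mem1 O _ _ _ hk1]
      unfold sig1
      rw [if_neg hnb, if_neg hnA, if_pos hZ]
    have hrV1 : pk k ∈ Prest.V1 := (restrict_V1_mem O BigD).2 ⟨hk1, hkz⟩
    have hredge := hθ.1 (wk k) (pk k) hrV1
    obtain ⟨hPedge, _, hzmem⟩ := (restrict_E_mem O BigD).1 hredge
    have hsnd := ((prod_edge_iff O BigD _ _).1 hPedge).2
    have hpair : pk (k+1) = θ1 (wk k) (pk k) := by
      refine Prod.ext ?_ ?_
      · show vk (k+1) = _
        rw [hvstep k]; exact hmv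
      · show BigD.eval (wk (k+1)) = _
        rw [hevalstep k]; exact hsnd.symm
    exact ⟨hpair, hpair ▸ hzmem⟩
  -- Player-2 step inside the core
  have hstep2 : ∀ k, pk k ∈ ZZset O BigD Vb FP → vk k ∈ O.V2 →
      (pk k, pk (k+1)) ∈ (O.prodDFA BigD).E ∧ pk (k+1)
        = (σ2' (wk k) (vk k), BigD.step (BigD.eval (wk k)) (O.Γ (vk k))) := by
    intro k hkz hk2
    have hnv1 : vk k ∉ O.V1 := fun h => Set.disjoint_left.1 hwf.1 h hk2
    have hmv : σc (wk k) (vk k) = σ2' (wk k) (vk k) := by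
      rw [hσc, combine_mem2 O _ _ _ hnv1]
    have hOedge : (vk k, σ2' (wk k) (vk k)) ∈ O.E := hσ2' (wk k) (vk k) hk2
    have hpair : pk (k+1) = (σ2' (wk k) (vk k), BigD.step (BigD.eval (wk k)) (O.Γ (vk k))) := by
      refine Prod.ext ?_ ?_
      · show vk (k+1) = _
        rw [hvstep k]; exact hmv
      · show BigD.eval (wk (k+1)) = _
        exact hevalstep k
    refine ⟨?_, hpair⟩
    rw [hpair]
    exact (prod_edge_iff O BigD _ _).2 ⟨hOedge, rfl⟩
  by_cases hstay : ∀ k, pk k ∈ ZZset O BigD Vb FP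
  · -- the play stays in the core forever: compare with the auxiliary game
    set cand := fun (w' : List C) (p : V × SB) =>
      ((σ2' w' p.1 : V), BigD.step p.2 (O.Γ p.1)) with hcand
    set auxσ2 := fun (w' : List C) (p : V × SB) =>
      if cand w' p ∈ ZZset O BigD Vb FP ∧ p ∈ ZZset O BigD Vb FP ∧
          (p, cand w' p) ∈ (O.prodDFA BigD).E then cand w' p
      else if h : ∃ c, c ∈ ZZset O BigD Vb FP ∧ (p, c) ∈ (O.prodDFA BigD).E then h.choose
      else p with hauxσ2
    have hauxval : Prest.Valid2 auxσ2 := by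
      intro w' p hp
      obtain ⟨hp2, hpz⟩ := (restrict_V2_mem O BigD).1 hp
      simp only [hauxσ2]
      by_cases hc : cand w' p ∈ ZZset O BigD Vb FP ∧ p ∈ ZZset O BigD Vb FP ∧
          (p, cand w' p) ∈ (O.prodDFA BigD).E
      · rw [if_pos hc]
        exact (restrict_E_mem O BigD).2 ⟨hc.2.2, hpz, hc.1⟩
      · rw [if_neg hc]
        have hex : ∃ c, c ∈ ZZset O BigD Vb FP ∧ (p, c) ∈ (O.prodDFA BigD).E := by
          obtain ⟨c, hc1, hc2⟩ := zz_closure O BigD Vb FP hwf hPwf hPfin p hpz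
          exact ⟨c, hc1, hc2⟩
        rw [dif_pos hex]
        exact (restrict_E_mem O BigD).2 ⟨hex.choose_spec.2, hpz, hex.choose_spec.1⟩
    have hcorr : ∀ k, Prest.stepSeq (Prest.combine θ1 auxσ2) w (v, BigD.eval w) k
        = (wk k, pk k) := by
      intro k
      induction k with
      | zero => rfl
      | succ k ih =>
          rw [stepSeq_succ, ih]
          have hΓ : Prest.Γ (pk k) = O.Γ (vk k) := rfl
          refine Prod.ext ?_ ?_
          · show wk k ++ [Prest.Γ (pk k)] = wk (k+1)
            rw [hΓ, hwstep k]
          · show Prest.combine θ1 auxσ2 (wk k) (pk k) = pk (k+1)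
            by_cases h1 : vk k ∈ O.V1
            · have hrV1 : pk k ∈ Prest.V1 := (restrict_V1_mem O BigD).2 ⟨h1, hstay k⟩
              rw [combine_mem1 Prest _ _ _ hrV1]
              exact (hstep1 k (hstay k) h1).1.symm
            · have hrnV1 : pk k ∉ Prest.V1 := by
                intro hcon
                exact h1 ((restrict_V1_mem O BigD).1 hcon).1
              rw [combine_mem2 Prest _ _ _ hrnV1]
              have h2 : vk k ∈ O.V2 := by
                rcases hvert k with h | h
                · exact absurd h h1
                · exact h
              obtain ⟨hPedge, hpair⟩ := hstep2 k (hstay k) h2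
              simp only [hauxσ2]
              have hcond : cand (wk k) (pk k) ∈ ZZset O BigD Vb FP ∧
                  pk k ∈ ZZset O BigD Vb FP ∧
                  (pk k, cand (wk k) (pk k)) ∈ (O.prodDFA BigD).E := by
                have hck : cand (wk k) (pk k) = pk (k+1) := by
                  rw [hcand, hpair]
                rw [hck]
                exact ⟨hstay (k+1), hstay k, hck ▸ hPedge⟩
              rw [if_pos hcond]
              show cand (wk k) (pk k) = pk (k+1)
              rw [hcand, hpair]
    have hplayeq : Prest.play (Prest.combine θ1 auxσ2) w (v, BigD.eval w)
        = O.play σc w v := by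
      funext i
      unfold Arena.play
      by_cases hi : i < w.length
      · rw [dif_pos hi, dif_pos hi]
      · rw [dif_neg hi, dif_neg hi, hcorr]
        rfl
    have hvrest : (v, BigD.eval w) ∈ Prest.vertices :=
      (restrict_vertices_mem O BigD).2 ⟨hv, hzz⟩
    have hmemWT : O.play σc w v ∈ WT := by
      rw [← hplayeq]
      exact (hθ.2.2 w (v, BigD.eval w) hvrest).1 htrig auxσ2 hauxval
    have hsafe : ∀ n, seqPrefix (O.play σc w v) n ∉ L := by
      rw [play_safe_iff]
      intro k hVP
      exact (hstay k).1.2 ((hVb (wk k)).2 hVP)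
    exact (hT _ hsafe).2 hmemWT
  · -- the play exits the core: it must enter Player 1's attractor
    push_neg at hstay
    have hfound : ∃ k, pk k ∉ ZZset O BigD Vb FP := hstay
    have hspec := Nat.find_spec hfound
    cases hfind : Nat.find hfound with
    | zero =>
        rw [hfind] at hspec
        exact absurd hzz hspec
    | succ j =>
        rw [hfind] at hspec
        have hj : pk j ∈ ZZset O BigD Vb FP := by
          have := Nat.find_min hfound (m := j) (by rw [hfind]; exact j.lt_succ_self)
          exact not_not.1 this
        have h2 : vk j ∈ O.V2 := by
          rcases hvert j with h | h
          · exact absurd ((hstep1 j hj h).2) hspec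
          · exact h
        obtain ⟨hPedge, _⟩ := hstep2 j hj h2
        have hclass := zz_succ_own2_mem O BigD Vb FP hwf hj h2 hPedge
        have hAA : pk (j+1) ∈ AAset O BigD Vb FP := by
          rcases hclass with h | h
          · exact absurd h hspec
          · exact h
        obtain ⟨_, ⟨n, rfl⟩, hn⟩ := hAA
        have hwin := attr1_main O BigD Vb FP τ1 τ2 θ1 L WFc W' hwf hVb hFP hτ hF n
          (wk (j+1)) (vk (j+1)) (hvert (j+1)) hn σ2' hσ2'
        rw [play_through O σc w v (j+1)]
        exact hwin

lemma zz2_main (hwf : O.WF) (hPwf : (O.prodDFA BigD).WF)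
    (hPfin : (O.prodDFA BigD).vertices.Finite)
    (hVb : ∀ w, Vb (BigD.eval w) ↔ VPref L w)
    (hFP : ∀ (w : List C), ∀ v ∈ O.vertices, (FP (v, BigD.eval w) ↔ O.Wins1From WFc w v))
    (hτ : O.IsHSPE WFc τ1 τ2)
    (hθ : ((O.prodDFA BigD).restrict (ZZset O BigD Vb FP)).IsHSPE WT θ1 θ2)
    (hT : ∀ ρ, (∀ n, seqPrefix ρ n ∉ L) → (ρ ∈ W' ↔ ρ ∈ WT))
    (hF : ∀ ρ, ¬(∀ n, seqPrefix ρ n ∉ L) → (ρ ∈ W' ↔ ρ ∈ WFc))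
    (w : List C) {v : V} (hv : v ∈ O.vertices)
    (hzz : (v, BigD.eval w) ∈ ZZset O BigD Vb FP)
    (htrig : ((O.prodDFA BigD).restrict (ZZset O BigD Vb FP)).play
      (((O.prodDFA BigD).restrict (ZZset O BigD Vb FP)).combine θ1 θ2) w (v, BigD.eval w) ∉ WT) :
    O.Winning2 W' (sig2 O BigD Vb FP τ2 θ2) w v := by
  intro σ1' hσ1'
  set Prest := (O.prodDFA BigD).restrict (ZZset O BigD Vb FP) with hPrest
  have hσ2gv : O.Valid2 (sig2 O BigD Vb FP τ2 θ2) :=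
    sig2_valid O BigD Vb FP τ2 θ2 hwf hτ.2.1 hθ.2.1
  set σc := O.combine σ1' (sig2 O BigD Vb FP τ2 θ2) with hσc
  have hvert : ∀ k, (O.stepSeq σc w v k).2 ∈ O.vertices :=
    stepSeq_mem_vertices hwf hσ1' hσ2gv w hv
  set wk := fun k => (O.stepSeq σc w v k).1 with hwk
  set vk := fun k => (O.stepSeq σc w v k).2 with hvk
  set pk := fun k => ((vk k : V), BigD.eval (wk k)) with hpk
  have hwstep : ∀ k, wk (k+1) = wk k ++ [O.Γ (vk k)] := fun k => rfl
  have hvstep : ∀ k, vk (k+1) = σc (wk k) (vk k) := fun k => rfl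
  have hevalstep : ∀ k, BigD.eval (wk (k+1)) = BigD.step (BigD.eval (wk k)) (O.Γ (vk k)) :=
    fun k => by rw [hwstep k, DFA.eval_snoc]
  -- Player-2 step inside the core
  have hstep2 : ∀ k, pk k ∈ ZZset O BigD Vb FP → vk k ∈ O.V2 →
      pk (k+1) = θ2 (wk k) (pk k) ∧ pk (k+1) ∈ ZZset O BigD Vb FP := by
    intro k hkz hk2
    have hnv1 : vk k ∉ O.V1 := fun h => Set.disjoint_left.1 hwf.1 h hk2
    have hnb : ¬ Vb (BigD.eval (wk k)) := hkz.1.2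
    have hnB : ((vk k : V), BigD.eval (wk k)) ∉ BBset O BigD Vb FP := hkz.2.2
    have hZ : ((vk k : V), BigD.eval (wk k)) ∈ ZZset O BigD Vb FP := hkz
    have hmv : σc (wk k) (vk k) = (θ2 (wk k) (pk k)).1 := by
      rw [hσc, combine_mem2 O _ _ _ hnv1]
      unfold sig2
      rw [if_neg hnb, if_neg hnB, if_pos hZ]
    have hrV2 : pk k ∈ Prest.V2 := (restrict_V2_mem O BigD).2 ⟨hk2, hkz⟩
    have hredge := hθ.2.1 (wk k) (pk k) hrV2
    obtain ⟨hPedge, _, hzmem⟩ := (restrict_E_mem O BigD).1 hredge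
    have hsnd := ((prod_edge_iff O BigD _ _).1 hPedge).2
    have hpair : pk (k+1) = θ2 (wk k) (pk k) := by
      refine Prod.ext ?_ ?_
      · show vk (k+1) = _
        rw [hvstep k]; exact hmv
      · show BigD.eval (wk (k+1)) = _
        rw [hevalstep k]; exact hsnd.symm
    exact ⟨hpair, hpair ▸ hzmem⟩
  -- Player-1 step inside the core
  have hstep1 : ∀ k, pk k ∈ ZZset O BigD Vb FP → vk k ∈ O.V1 →
      (pk k, pk (k+1)) ∈ (O.prodDFA BigD).E ∧ pk (k+1)
        = (σ1' (wk k) (vk k), BigD.step (BigD.eval (wk k)) (O.Γ (vk k))) := by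
    intro k hkz hk1
    have hmv : σc (wk k) (vk k) = σ1' (wk k) (vk k) := by
      rw [hσc, combine_mem1 O _ _ _ hk1]
    have hOedge : (vk k, σ1' (wk k) (vk k)) ∈ O.E := hσ1' (wk k) (vk k) hk1
    have hpair : pk (k+1) = (σ1' (wk k) (vk k), BigD.step (BigD.eval (wk k)) (O.Γ (vk k))) := by
      refine Prod.ext ?_ ?_
      · show vk (k+1) = _
        rw [hvstep k]; exact hmv
      · show BigD.eval (wk (k+1)) = _
        exact hevalstep k
    refine ⟨?_, hpair⟩
    rw [hpair]
    exact (prod_edge_iff O BigD _ _).2 ⟨hOedge, rfl⟩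
  by_cases hstay : ∀ k, pk k ∈ ZZset O BigD Vb FP
  · -- the play stays in the core forever
    set cand := fun (w' : List C) (p : V × SB) =>
      ((σ1' w' p.1 : V), BigD.step p.2 (O.Γ p.1)) with hcand
    set auxσ1 := fun (w' : List C) (p : V × SB) =>
      if cand w' p ∈ ZZset O BigD Vb FP ∧ p ∈ ZZset O BigD Vb FP ∧
          (p, cand w' p) ∈ (O.prodDFA BigD).E then cand w' p
      else if h : ∃ c, c ∈ ZZset O BigD Vb FP ∧ (p, c) ∈ (O.prodDFA BigD).E then h.choose
      else p with hauxσ1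
    have hauxval : Prest.Valid1 auxσ1 := by
      intro w' p hp
      obtain ⟨hp1, hpz⟩ := (restrict_V1_mem O BigD).1 hp
      simp only [hauxσ1]
      by_cases hc : cand w' p ∈ ZZset O BigD Vb FP ∧ p ∈ ZZset O BigD Vb FP ∧
          (p, cand w' p) ∈ (O.prodDFA BigD).E
      · rw [if_pos hc]
        exact (restrict_E_mem O BigD).2 ⟨hc.2.2, hpz, hc.1⟩
      · rw [if_neg hc]
        have hex : ∃ c, c ∈ ZZset O BigD Vb FP ∧ (p, c) ∈ (O.prodDFA BigD).E := by
          obtain ⟨c, hc1, hc2⟩ := zz_closure O BigD Vb FP hwf hPwf hPfin p hpz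
          exact ⟨c, hc1, hc2⟩
        rw [dif_pos hex]
        exact (restrict_E_mem O BigD).2 ⟨hex.choose_spec.2, hpz, hex.choose_spec.1⟩
    have hcorr : ∀ k, Prest.stepSeq (Prest.combine auxσ1 θ2) w (v, BigD.eval w) k
        = (wk k, pk k) := by
      intro k
      induction k with
      | zero => rfl
      | succ k ih =>
          rw [stepSeq_succ, ih]
          refine Prod.ext ?_ ?_
          · show wk k ++ [Prest.Γ (pk k)] = wk (k+1)
            rw [hwstep k]
            rfl
          · show Prest.combine auxσ1 θ2 (wk k) (pk k) = pk (k+1)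
            by_cases h1 : vk k ∈ O.V1
            · have hrV1 : pk k ∈ Prest.V1 := (restrict_V1_mem O BigD).2 ⟨h1, hstay k⟩
              rw [combine_mem1 Prest _ _ _ hrV1]
              obtain ⟨hPedge, hpair⟩ := hstep1 k (hstay k) h1
              simp only [hauxσ1]
              have hcond : cand (wk k) (pk k) ∈ ZZset O BigD Vb FP ∧
                  pk k ∈ ZZset O BigD Vb FP ∧
                  (pk k, cand (wk k) (pk k)) ∈ (O.prodDFA BigD).E := by
                have hck : cand (wk k) (pk k) = pk (k+1) := by
                  rw [hcand, hpair]
                rw [hck]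
                exact ⟨hstay (k+1), hstay k, hck ▸ hPedge⟩
              rw [if_pos hcond]
              show cand (wk k) (pk k) = pk (k+1)
              rw [hcand, hpair]
            · have hrnV1 : pk k ∉ Prest.V1 := by
                intro hcon
                exact h1 ((restrict_V1_mem O BigD).1 hcon).1
              rw [combine_mem2 Prest _ _ _ hrnV1]
              have h2 : vk k ∈ O.V2 := by
                rcases hvert k with h | h
                · exact absurd h h1
                · exact h
              exact (hstep2 k (hstay k) h2).1.symm
    have hplayeq : Prest.play (Prest.combine auxσ1 θ2) w (v, BigD.eval w)
        = O.play σc w v := by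
      funext i
      unfold Arena.play
      by_cases hi : i < w.length
      · rw [dif_pos hi, dif_pos hi]
      · rw [dif_neg hi, dif_neg hi, hcorr]
        rfl
    have hvrest : (v, BigD.eval w) ∈ Prest.vertices :=
      (restrict_vertices_mem O BigD).2 ⟨hv, hzz⟩
    have hmemWT : O.play σc w v ∉ WT := by
      rw [← hplayeq]
      exact (hθ.2.2 w (v, BigD.eval w) hvrest).2 htrig auxσ1 hauxval
    have hsafe : ∀ n, seqPrefix (O.play σc w v) n ∉ L := by
      rw [play_safe_iff]
      intro k hVP
      exact (hstay k).1.2 ((hVb (wk k)).2 hVP)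
    intro hmem
    exact hmemWT ((hT _ hsafe).1 hmem)
  · -- the play exits the core: it must enter Player 2's attractor
    push_neg at hstay
    have hfound : ∃ k, pk k ∉ ZZset O BigD Vb FP := hstay
    have hspec := Nat.find_spec hfound
    cases hfind : Nat.find hfound with
    | zero =>
        rw [hfind] at hspec
        exact absurd hzz hspec
    | succ j =>
        rw [hfind] at hspec
        have hj : pk j ∈ ZZset O BigD Vb FP := by
          have := Nat.find_min hfound (m := j) (by rw [hfind]; exact j.lt_succ_self)
          exact not_not.1 this
        have h1 : vk j ∈ O.V1 := by
          rcases hvert j with h | h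
          · exact h
          · exact absurd ((hstep2 j hj h).2) hspec
        obtain ⟨hPedge, _⟩ := hstep1 j hj h1
        have hclass := zz_succ_own1_mem O BigD Vb FP hwf hj h1 hPedge
        have hBB : pk (j+1) ∈ BBset O BigD Vb FP := by
          rcases hclass with h | h
          · exact absurd h hspec
          · exact h
        obtain ⟨_, ⟨n, rfl⟩, hn⟩ := hBB
        have hwin := attr2_main O BigD Vb FP τ1 τ2 θ2 L WFc W' hwf hVb hFP hτ hF n
          (wk (j+1)) (vk (j+1)) (hvert (j+1)) hn σ1' hσ1'
        rw [play_through O σc w v (j+1)]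
        exact hwin

end Aux

/-! ### Part 9: the core lemma -/

namespace Aux

attribute [local instance] Classical.propDecidable

lemma core {C V : Type}
    (𝒪 : Set (Σ V : Type, Arena V C))
    (h𝒪wf : ∀ A ∈ 𝒪, A.2.WF ∧ A.2.vertices.Finite)
    (h𝒪prod : ∀ A ∈ 𝒪, ∀ (Q : Type), Fintype Q → ∀ D : DFA C Q,
      (⟨A.1 × Q, A.2.prodDFA D⟩ : Σ V : Type, Arena V C) ∈ 𝒪)
    (h𝒪res : ∀ A ∈ 𝒪, ∀ S : Set A.1, S ⊆ A.2.vertices →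
      (∀ v ∈ S, ∃ u ∈ S, (v, u) ∈ A.2.E) →
      (⟨A.1, A.2.restrict S⟩ : Σ V : Type, Arena V C) ∈ 𝒪)
    (O : Arena V C) (hO : (⟨V, O⟩ : Σ V : Type, Arena V C) ∈ 𝒪)
    (L : Set (List C)) (hreg : IsRegularLang L)
    (WT WFc W' : Set (ℕ → C))
    (H : ∀ A ∈ 𝒪, (A.2.RegularlyPredictable WT ∧ A.2.HasFMhSPE WT)
       ∧ (A.2.RegularlyPredictable WFc ∧ A.2.HasFMhSPE WFc))
    (hT : ∀ ρ, (∀ n, seqPrefix ρ n ∉ L) → (ρ ∈ W' ↔ ρ ∈ WT))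
    (hF : ∀ ρ, ¬(∀ n, seqPrefix ρ n ∉ L) → (ρ ∈ W' ↔ ρ ∈ WFc)) :
    O.RegularlyPredictable W' ∧ O.HasFMhSPE W' := by
  obtain ⟨hwf, hfin⟩ := h𝒪wf ⟨V, O⟩ hO
  obtain ⟨Q0, iQ0, 𝒜, h𝒜⟩ := hreg
  have HO := H ⟨V, O⟩ hO
  obtain ⟨τ1, τ2, hτ, hFMτ1, hFMτ2⟩ := HO.2.2
  have hRPF := HO.2.1
  haveI : Fintype ↥O.vertices := hfin.fintype
  haveI : DecidableEq ↥O.vertices := Classical.decEq _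
  -- vertex-indexed DFAs predicting `Wins1From WFc`
  have hD : ∀ v : ↥O.vertices, ∃ (Q : Type) (_ : Fintype Q) (A : DFA C Q),
      ∀ w : List C, w ∈ A.accepts ↔ O.Wins1From WFc w v.1 := fun v => hRPF v.1 v.2
  set QF : ↥O.vertices → Type := fun v => (hD v).choose with hQF
  haveI iQF : ∀ v, Fintype (QF v) := fun v => (hD v).choose_spec.choose
  set DF : ∀ v, DFA C (QF v) := fun v => (hD v).choose_spec.choose_spec.choose with hDFdef
  have hDF : ∀ (v : ↥O.vertices) (w : List C),
      w ∈ (DF v).accepts ↔ O.Wins1From WFc w v.1 :=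
    fun v => (hD v).choose_spec.choose_spec.choose_spec
  -- the big tracking DFA
  set SB := ((Q0 × Prop) × ∀ v : ↥O.vertices, QF v) with hSB
  haveI iSB : Fintype SB := by
    refine @instFintypeProd _ _ ?_ ?_
    · infer_instance
    · exact Pi.instFintype
  set BigD : DFA C SB := pairDFA (stickyDFA 𝒜) (piDFA DF) with hBigD
  set Vb : SB → Prop := fun s => s.1.2 with hVbdef
  set FP : V × SB → Prop :=
    fun p => ∃ h : p.1 ∈ O.vertices, p.2.2 ⟨p.1, h⟩ ∈ (DF ⟨p.1, h⟩).accept with hFPdef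
  have hevalpair : ∀ w : List C,
      BigD.eval w = ((stickyDFA 𝒜).eval w, (piDFA DF).eval w) := fun w => pairDFA_eval _ _ w
  have hVb : ∀ w, Vb (BigD.eval w) ↔ VPref L w := by
    intro w
    show (BigD.eval w).1.2 ↔ _
    rw [hevalpair w, stickyDFA_eval 𝒜 h𝒜 w]
  have hevalF : ∀ (w : List C) (v : ↥O.vertices),
      (BigD.eval w).2 v = (DF v).eval w := by
    intro w v
    rw [hevalpair w]
    exact piDFA_eval DF w v
  have hFP : ∀ (w : List C), ∀ v ∈ O.vertices,
      (FP (v, BigD.eval w) ↔ O.Wins1From WFc w v) := by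
    intro w v hv
    constructor
    · rintro ⟨h, hmem⟩
      rw [hevalF w ⟨v, h⟩] at hmem
      exact (hDF ⟨v, h⟩ w).1 hmem
    · intro hwin
      refine ⟨hv, ?_⟩
      rw [hevalF w ⟨v, hv⟩]
      exact (hDF ⟨v, hv⟩ w).2 hwin
  -- the product arena is in the class
  have hP : (⟨V × SB, O.prodDFA BigD⟩ : Σ V : Type, Arena V C) ∈ 𝒪 :=
    h𝒪prod ⟨V, O⟩ hO SB iSB BigD
  obtain ⟨hPwf, hPfin⟩ := h𝒪wf _ hP
  -- the restricted core arena is in the class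
  have hZsub : ZZset O BigD Vb FP ⊆ (O.prodDFA BigD).vertices :=
    fun p hp => rset_subset_vertices O BigD hp.1.1
  have hrest : (⟨V × SB, (O.prodDFA BigD).restrict (ZZset O BigD Vb FP)⟩
      : Σ V : Type, Arena V C) ∈ 𝒪 :=
    h𝒪res ⟨V × SB, O.prodDFA BigD⟩ hP (ZZset O BigD Vb FP) hZsub
      (zz_closure O BigD Vb FP hwf hPwf hPfin)
  have Hrest := H _ hrest
  obtain ⟨θ1, θ2, hθ0, hFMθ1, hFMθ2⟩ := Hrest.1.2
  have hθ : ((O.prodDFA BigD).restrict (ZZset O BigD Vb FP)).IsHSPE WT θ1 θ2 := hθ0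
  have hRPT : ((O.prodDFA BigD).restrict (ZZset O BigD Vb FP)).RegularlyPredictable WT :=
    Hrest.1.1
  have hσ1v : O.Valid1 (sig1 O BigD Vb FP τ1 θ1) :=
    sig1_valid O BigD Vb FP τ1 θ1 hwf hτ.1 hθ.1
  have hσ2v : O.Valid2 (sig2 O BigD Vb FP τ2 θ2) :=
    sig2_valid O BigD Vb FP τ2 θ2 hwf hτ.2.1 hθ.2.1
  -- the criterion for Player 1 winning
  have hM1 : ∀ (w : List C), ∀ v ∈ O.vertices,
      ((v, BigD.eval w) ∈ AAset O BigD Vb FP ∨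
       ((v, BigD.eval w) ∈ ZZset O BigD Vb FP ∧
        ((O.prodDFA BigD).restrict (ZZset O BigD Vb FP)).play
          (((O.prodDFA BigD).restrict (ZZset O BigD Vb FP)).combine θ1 θ2) w
          (v, BigD.eval w) ∈ WT)) →
      O.Winning1 W' (sig1 O BigD Vb FP τ1 θ1) w v := by
    intro w v hv hc
    rcases hc with hA | ⟨hz, ht⟩
    · obtain ⟨_, ⟨n, rfl⟩, hn⟩ := hA
      exact attr1_main O BigD Vb FP τ1 τ2 θ1 L WFc W' hwf hVb hFP hτ hF n w v hv hn
    · exact zz1_main O BigD Vb FP τ1 τ2 θ1 θ2 L WFc WT W' hwf hPwf hPfin hVb hFP hτ hθ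
        hT hF w hv hz ht
  have hM2 : ∀ (w : List C), ∀ v ∈ O.vertices,
      ¬ ((v, BigD.eval w) ∈ AAset O BigD Vb FP ∨
       ((v, BigD.eval w) ∈ ZZset O BigD Vb FP ∧
        ((O.prodDFA BigD).restrict (ZZset O BigD Vb FP)).play
          (((O.prodDFA BigD).restrict (ZZset O BigD Vb FP)).combine θ1 θ2) w
          (v, BigD.eval w) ∈ WT)) →
      O.Winning2 W' (sig2 O BigD Vb FP τ2 θ2) w v := by
    intro w v hv hc
    push_neg at hc
    obtain ⟨hnA, hzimp⟩ := hc
    have hpos : (v, BigD.eval w) ∈ Rset O BigD := mem_rset_pos O BigD hv w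
    rcases rset_cases O BigD Vb FP hpos with hg | hb | hs
    · exact absurd (⟨_, ⟨0, rfl⟩, hg⟩ : (v, BigD.eval w) ∈ AAset O BigD Vb FP) hnA
    · exact attr2_main O BigD Vb FP τ1 τ2 θ2 L WFc W' hwf hVb hFP hτ hF 0 w v hv hb
    · by_cases hB : (v, BigD.eval w) ∈ BBset O BigD Vb FP
      · obtain ⟨_, ⟨n, rfl⟩, hn⟩ := hB
        exact attr2_main O BigD Vb FP τ1 τ2 θ2 L WFc W' hwf hVb hFP hτ hF n w v hv hn
      · have hz : (v, BigD.eval w) ∈ ZZset O BigD Vb FP := ⟨hs, hnA, hB⟩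
        exact zz2_main O BigD Vb FP τ1 τ2 θ1 θ2 L WFc WT W' hwf hPwf hPfin hVb hFP hτ hθ
          hT hF w hv hz (hzimp hz)
  have hwins_iff : ∀ (w : List C), ∀ v ∈ O.vertices, (O.Wins1From W' w v ↔
      ((v, BigD.eval w) ∈ AAset O BigD Vb FP ∨
       ((v, BigD.eval w) ∈ ZZset O BigD Vb FP ∧
        ((O.prodDFA BigD).restrict (ZZset O BigD Vb FP)).play
          (((O.prodDFA BigD).restrict (ZZset O BigD Vb FP)).combine θ1 θ2) w
          (v, BigD.eval w) ∈ WT))) := by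
    intro w v hv
    constructor
    · rintro ⟨σ1', hval, hwin⟩
      by_contra hc
      exact hM2 w v hv hc σ1' hval (hwin _ hσ2v)
    · intro hc
      exact ⟨_, hσ1v, hM1 w v hv hc⟩
  constructor
  · -- regular predictability
    intro v hv
    haveI iZfin : Fintype ↥(ZZset O BigD Vb FP) := (hPfin.subset hZsub).fintype
    haveI : DecidableEq ↥(ZZset O BigD Vb FP) := Classical.decEq _
    have hDz : ∀ p : ↥(ZZset O BigD Vb FP), ∃ (Q : Type) (_ : Fintype Q) (A : DFA C Q),
        ∀ w : List C, w ∈ A.accepts ↔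
          ((O.prodDFA BigD).restrict (ZZset O BigD Vb FP)).Wins1From WT w p.1 := by
      intro p
      refine hRPT p.1 ?_
      refine (restrict_vertices_mem O BigD).2 ⟨?_, p.2⟩
      exact ((prod_vertices_iff O BigD p.1).1 (hZsub p.2))
    set QZ : ↥(ZZset O BigD Vb FP) → Type := fun p => (hDz p).choose with hQZ
    haveI iQZ : ∀ p, Fintype (QZ p) := fun p => (hDz p).choose_spec.choose
    set DZ : ∀ p, DFA C (QZ p) := fun p => (hDz p).choose_spec.choose_spec.choose with hDZdef
    have hDZ : ∀ (p : ↥(ZZset O BigD Vb FP)) (w : List C),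
        w ∈ (DZ p).accepts ↔
          ((O.prodDFA BigD).restrict (ZZset O BigD Vb FP)).Wins1From WT w p.1 :=
      fun p => (hDz p).choose_spec.choose_spec.choose_spec
    set Acc : Set (SB × (∀ p : ↥(ZZset O BigD Vb FP), QZ p)) :=
      {s | (v, s.1) ∈ AAset O BigD Vb FP ∨
        ∃ h : (v, s.1) ∈ ZZset O BigD Vb FP,
          s.2 ⟨(v, s.1), h⟩ ∈ (DZ ⟨(v, s.1), h⟩).accept} with hAcc
    refine ⟨SB × (∀ p : ↥(ZZset O BigD Vb FP), QZ p), inferInstance,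
      ⟨(pairDFA BigD (piDFA DZ)).step, (pairDFA BigD (piDFA DZ)).start, Acc⟩, fun w => ?_⟩
    rw [hwins_iff w v hv, DFA.mem_accepts]
    show (pairDFA BigD (piDFA DZ)).evalFrom (pairDFA BigD (piDFA DZ)).start w ∈ Acc ↔ _
    rw [show (pairDFA BigD (piDFA DZ)).evalFrom (pairDFA BigD (piDFA DZ)).start w
      = (BigD.eval w, (piDFA DZ).eval w) from pairDFA_eval BigD (piDFA DZ) w]
    show ((v, BigD.eval w) ∈ AAset O BigD Vb FP ∨
        ∃ h : (v, BigD.eval w) ∈ ZZset O BigD Vb FP,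
          (piDFA DZ).eval w ⟨(v, BigD.eval w), h⟩
            ∈ (DZ ⟨(v, BigD.eval w), h⟩).accept) ↔ _
    constructor
    · rintro (hA | ⟨h, hmem⟩)
      · exact Or.inl hA
      · refine Or.inr ⟨h, ?_⟩
        rw [piDFA_eval DZ w ⟨(v, BigD.eval w), h⟩] at hmem
        have hwz := (hDZ ⟨(v, BigD.eval w), h⟩ w).1 hmem
        rw [wins1From_iff_of_isHSPE hθ w ((restrict_vertices_mem O BigD).2
          ⟨hv, h⟩)] at hwz
        exact hwz
    · rintro (hA | ⟨h, hmem⟩)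
      · exact Or.inl hA
      · refine Or.inr ⟨h, ?_⟩
        rw [piDFA_eval DZ w ⟨(v, BigD.eval w), h⟩]
        refine (hDZ ⟨(v, BigD.eval w), h⟩ w).2 ?_
        rw [wins1From_iff_of_isHSPE hθ w ((restrict_vertices_mem O BigD).2 ⟨hv, h⟩)]
        exact hmem
  · -- finite-memory hSPE
    refine ⟨sig1 O BigD Vb FP τ1 θ1, sig2 O BigD Vb FP τ2 θ2, ?_, ?_, ?_⟩
    · refine isHSPE_of_optimal hσ1v hσ2v (fun w v hv => ?_)
      by_cases hc : ((v, BigD.eval w) ∈ AAset O BigD Vb FP ∨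
       ((v, BigD.eval w) ∈ ZZset O BigD Vb FP ∧
        ((O.prodDFA BigD).restrict (ZZset O BigD Vb FP)).play
          (((O.prodDFA BigD).restrict (ZZset O BigD Vb FP)).combine θ1 θ2) w
          (v, BigD.eval w) ∈ WT))
      · exact Or.inl (hM1 w v hv hc)
      · exact Or.inr (hM2 w v hv hc)
    · -- σ1 is finite-memory
      obtain ⟨Mτ, iMτ, mτ0, ατu, ατn, hτe⟩ := hFMτ1
      obtain ⟨Mθ, iMθ, mθ0, αθu, αθn, hθe⟩ := hFMθ1
      refine ⟨SB × (Mτ × Mθ), inferInstance, (BigD.start, mτ0, mθ0),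
        fun m c => (BigD.step m.1 c, ατu m.2.1 c, αθu m.2.2 c),
        fun m v => if Vb m.1 then ατn m.2.1 v
          else if (v, m.1) ∈ AAset O BigD Vb FP then amove1 O BigD Vb FP (v, m.1)
          else if (v, m.1) ∈ ZZset O BigD Vb FP then (αθn m.2.2 (v, m.1)).1
          else dfltS O [] v, ?_⟩
      intro w v hv
      have hfold : w.foldl (fun m c => (BigD.step m.1 c, ατu m.2.1 c, αθu m.2.2 c))
          (BigD.start, mτ0, mθ0)
          = (BigD.eval w, w.foldl ατu mτ0, w.foldl αθu mθ0) := by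
        rw [foldl_pair BigD.step (fun m c => (ατu m.1 c, αθu m.2 c)) w BigD.start (mτ0, mθ0),
          foldl_pair ατu αθu w mτ0 mθ0]
        rfl
      rw [hfold]
      beta_reduce
      unfold sig1
      by_cases h1 : Vb (BigD.eval w)
      · rw [if_pos h1, if_pos h1]
        exact hτe w v hv
      · rw [if_neg h1, if_neg h1]
        by_cases h2 : (v, BigD.eval w) ∈ AAset O BigD Vb FP
        · rw [if_pos h2, if_pos h2]
        · rw [if_neg h2, if_neg h2]
          by_cases h3 : (v, BigD.eval w) ∈ ZZset O BigD Vb FP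
          · rw [if_pos h3, if_pos h3]
            rw [hθe w (v, BigD.eval w) ((restrict_V1_mem O BigD).2 ⟨hv, h3⟩)]
          · rw [if_neg h3, if_neg h3]
            rfl
    · -- σ2 is finite-memory
      obtain ⟨Mτ, iMτ, mτ0, ατu, ατn, hτe⟩ := hFMτ2
      obtain ⟨Mθ, iMθ, mθ0, αθu, αθn, hθe⟩ := hFMθ2
      refine ⟨SB × (Mτ × Mθ), inferInstance, (BigD.start, mτ0, mθ0),
        fun m c => (BigD.step m.1 c, ατu m.2.1 c, αθu m.2.2 c),
        fun m v => if Vb m.1 then ατn m.2.1 v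
          else if (v, m.1) ∈ BBset O BigD Vb FP then amove2 O BigD Vb FP (v, m.1)
          else if (v, m.1) ∈ ZZset O BigD Vb FP then (αθn m.2.2 (v, m.1)).1
          else dfltS O [] v, ?_⟩
      intro w v hv
      have hfold : w.foldl (fun m c => (BigD.step m.1 c, ατu m.2.1 c, αθu m.2.2 c))
          (BigD.start, mτ0, mθ0)
          = (BigD.eval w, w.foldl ατu mτ0, w.foldl αθu mθ0) := by
        rw [foldl_pair BigD.step (fun m c => (ατu m.1 c, αθu m.2 c)) w BigD.start (mτ0, mθ0),
          foldl_pair ατu αθu w mτ0 mθ0]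
        rfl
      rw [hfold]
      beta_reduce
      unfold sig2
      by_cases h1 : Vb (BigD.eval w)
      · rw [if_pos h1, if_pos h1]
        exact hτe w v hv
      · rw [if_neg h1, if_neg h1]
        by_cases h2 : (v, BigD.eval w) ∈ BBset O BigD Vb FP
        · rw [if_pos h2, if_pos h2]
        · rw [if_neg h2, if_neg h2]
          by_cases h3 : (v, BigD.eval w) ∈ ZZset O BigD Vb FP
          · rw [if_pos h3, if_pos h3]
            rw [hθe w (v, BigD.eval w) ((restrict_V2_mem O BigD).2 ⟨hv, h3⟩)]
          · rw [if_neg h3, if_neg h3]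
            rfl

end Aux

/-- main theorem. Regular combinations preserve regular-predictability
and the existence of finite-memory hSPE. -/
theorem stmt6 {C : Type}
    (𝒪 : Set (Σ V : Type, Arena V C))
    (h𝒪wf : ∀ A ∈ 𝒪, A.2.WF ∧ A.2.vertices.Finite)
    (h𝒪prod : ∀ A ∈ 𝒪, ∀ (Q : Type), Fintype Q → ∀ D : DFA C Q,
      (⟨A.1 × Q, A.2.prodDFA D⟩ : Σ V : Type, Arena V C) ∈ 𝒪)
    (h𝒪res : ∀ A ∈ 𝒪, ∀ S : Set A.1, S ⊆ A.2.vertices →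
      (∀ v ∈ S, ∃ u ∈ S, (v, u) ∈ A.2.E) →
      (⟨A.1, A.2.restrict S⟩ : Σ V : Type, Arena V C) ∈ 𝒪)
    (𝒲 : Set (Set (ℕ → C)))
    (h𝒲compl : ∀ W ∈ 𝒲, Wᶜ ∈ 𝒲)
    (h𝒲union : ∀ W ∈ 𝒲, ∀ W' ∈ 𝒲, W ∪ W' ∈ 𝒲)
    (hbase : ∀ A ∈ 𝒪, ∀ W ∈ 𝒲, A.2.RegularlyPredictable W ∧ A.2.HasFMhSPE W) :
    ∀ l : ℕ, ∀ A ∈ 𝒪, ∀ W' ∈ Rl 𝒲 l,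
      A.2.RegularlyPredictable W' ∧ A.2.HasFMhSPE W' := by
  intro l
  induction l with
  | zero =>
      rintro ⟨V, O⟩ hA W' ⟨k, φ, Ws, Ls, hWs, hLs, rfl⟩
      have harg : ∀ ρ : ℕ → C,
          (fun j : Fin 0 => ∀ n, seqPrefix ρ n ∉ Ls j) = (fun j : Fin 0 => j.elim0) :=
        fun ρ => funext fun j => j.elim0
      have hset : {ρ | φ (fun i => ρ ∈ Ws i) (fun j => ∀ n, seqPrefix ρ n ∉ Ls j)}
          = {ρ | (fun x => φ x (fun j : Fin 0 => j.elim0)) (fun i => ρ ∈ Ws i)} := by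
        ext ρ
        show φ _ _ ↔ φ _ _
        rw [harg ρ]
      rw [hset]
      rcases Aux.memBig_boolcombo h𝒲compl h𝒲union k Ws hWs
        (fun x => φ x (fun j : Fin 0 => j.elim0)) with h | h | h
      · exact hbase ⟨V, O⟩ hA _ h
      · rw [h]
        exact Aux.constGame (h𝒪wf ⟨V, O⟩ hA).1 ∅ (Or.inr (fun ρ hρ => hρ))
      · rw [h]
        exact Aux.constGame (h𝒪wf ⟨V, O⟩ hA).1 Set.univ (Or.inl (fun ρ => trivial))
  | succ l ih =>
      rintro ⟨V, O⟩ hA W' ⟨k, φ, Ws, Ls, hWs, hLs, rfl⟩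
      have hWT_mem : {ρ : ℕ → C | φ (fun i => ρ ∈ Ws i)
          (Fin.snoc (fun j : Fin l => ∀ n, seqPrefix ρ n ∉ Ls j.castSucc) True)} ∈ Rl 𝒲 l :=
        ⟨k, fun x y => φ x (Fin.snoc y True), Ws, fun j => Ls j.castSucc, hWs,
          fun j => hLs _, rfl⟩
      have hWF_mem : {ρ : ℕ → C | φ (fun i => ρ ∈ Ws i)
          (Fin.snoc (fun j : Fin l => ∀ n, seqPrefix ρ n ∉ Ls j.castSucc) False)} ∈ Rl 𝒲 l :=
        ⟨k, fun x y => φ x (Fin.snoc y False), Ws, fun j => Ls j.castSucc, hWs,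
          fun j => hLs _, rfl⟩
      refine Aux.core 𝒪 h𝒪wf h𝒪prod h𝒪res O hA (Ls (Fin.last l)) (hLs (Fin.last l))
        {ρ : ℕ → C | φ (fun i => ρ ∈ Ws i)
          (Fin.snoc (fun j : Fin l => ∀ n, seqPrefix ρ n ∉ Ls j.castSucc) True)}
        {ρ : ℕ → C | φ (fun i => ρ ∈ Ws i)
          (Fin.snoc (fun j : Fin l => ∀ n, seqPrefix ρ n ∉ Ls j.castSucc) False)}
        _ (fun A hA => ⟨ih A hA _ hWT_mem, ih A hA _ hWF_mem⟩) ?_ ?_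
      · intro ρ hsafe
        show φ _ _ ↔ φ _ _
        rw [Aux.snoc_safety_eq (fun j : Fin (l+1) => ∀ n, seqPrefix ρ n ∉ Ls j) hsafe]
      · intro ρ hunsafe
        show φ _ _ ↔ φ _ _
        rw [Aux.snoc_safety_eq_false (fun j : Fin (l+1) => ∀ n, seqPrefix ρ n ∉ Ls j) hunsafe]
end
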